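/- arXiv:2012.10864 — 4 statements merged into one kernel-verified Lean document; each statement's English description precedes it below -/
import Mathlib

section
/- Abelian lower bound for the Laplace exponent: under (H0), assume in addition that lim_{x→0+} φ((x,∞))/x^{−α} = C for some α ∈ (1,2) and C > 0. Then there exist constants b > 0 and R > 0 such that |ψ(ξ)| ≥ b |ξ|^α for every complex ξ with Re ξ > 0 and |ξ| ≥ R. -/
open MeasureTheory Set Filter Topology

noncomputable section

/-- The tail `φ((y, ∞))` of the Lévy measure `φ`. -/
def levyTail (φ : Measure ℝ) (y : ℝ) : ℝ := (φ (Ioi y)).toReal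

/-- The function `Φ(x) = ∫_x^∞ φ((y,∞)) dy` for `x > 0`, and `0` for `x ≤ 0`. -/
def PhiFn (φ : Measure ℝ) (x : ℝ) : ℝ :=
  if 0 < x then ∫ y in Ioi x, levyTail φ y else 0

/-- The Laplace exponent `ψ(ξ) = ξ² ∫_0^∞ e^{-ξ x} Φ(x) dx`. -/
def psiFn (φ : Measure ℝ) (ξ : ℂ) : ℂ :=
  ξ ^ 2 * ∫ x in Ioi (0 : ℝ), Complex.exp (-ξ * (x : ℂ)) * (PhiFn φ x : ℂ)

/-- Assumption (H0): `φ` is a nonnegative Borel measure on `(0,∞)` with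
`∫ (z² ∧ z) φ(dz) < ∞` and `∫_{(0,1)} z φ(dz) = ∞`. -/
def H0 (φ : Measure ℝ) : Prop :=
  φ (Iic 0) = 0 ∧
  (∫⁻ z in Ioi (0 : ℝ), ENNReal.ofReal (min (z ^ 2) z) ∂φ) < ⊤ ∧
  (∫⁻ z in Ioo (0 : ℝ) 1, ENNReal.ofReal z ∂φ) = ⊤

/-!
By Fubini, `ψ(ξ) = ξ ∫_0^∞ T(y) (1 - e^{-ξy}) dy` with `T(y) = φ((y,∞))`; the integral converges
because `∫ (y ∧ 1) T(y) dy < ∞`, which follows from the moment condition in (H0) away from `0` and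
from `T(y) ≍ y^{-α}`, `α < 2`, near `0`. The integrand has nonnegative real part, so
`|ψ(ξ)| ≥ |ξ| ∫_a^{2a} T(y) (1 - Re e^{-ξy}) dy` for every `a > 0`. Take `a ≍ 1/|ξ|` such that
`1 - Re e^{-ξy}` is bounded below on `[a, 2a]`: `a = 1/Re ξ` when `Re ξ ≥ |ξ|/2`, and otherwise
`a = π/(2|Im ξ|)`, where the cosine in `Re e^{-ξy}` is nonpositive. With `T(y) ≥ (C/2) y^{-α}` for
small `y` this gives `|ψ(ξ)| ≳ |ξ| a^{1-α} ≳ |ξ|^α`.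
-/

lemma integral_Ioo_cexp_neg_mul {ξ : ℂ} (hξ : ξ ≠ 0) {y : ℝ} (hy : 0 ≤ y) :
    ∫ x in Ioo 0 y, Complex.exp (-ξ * x) = (1 - Complex.exp (-ξ * y)) / ξ := by
  rw [← integral_Ioc_eq_integral_Ioo, ← intervalIntegral.integral_of_le hy,
    integral_exp_mul_complex (neg_ne_zero.mpr hξ), Complex.ofReal_zero, mul_zero, Complex.exp_zero,
    div_neg, ← neg_div, neg_sub]

lemma norm_cexp_neg_mul_le_one {ξ : ℂ} (hξ : 0 ≤ ξ.re) {x : ℝ} (hx : 0 ≤ x) :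
    ‖Complex.exp (-ξ * x)‖ ≤ 1 := by
  rw [Complex.norm_exp, Real.exp_le_one_iff]
  simpa using mul_nonneg hξ hx

lemma norm_one_sub_cexp_neg_mul_le {ξ : ℂ} (hξ : 0 ≤ ξ.re) {y : ℝ} (hy : 0 ≤ y) :
    ‖1 - Complex.exp (-ξ * y)‖ ≤ max ‖ξ‖ 2 * min y 1 := by
  rcases eq_or_ne ξ 0 with rfl | hξ0
  · simpa using hy
  have hlin : ‖1 - Complex.exp (-ξ * y)‖ ≤ ‖ξ‖ * y := by
    rw [← mul_div_cancel₀ (1 - Complex.exp (-ξ * y)) hξ0, ← integral_Ioo_cexp_neg_mul hξ0 hy,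
      norm_mul]
    gcongr
    simpa [Real.volume_Ioo, hy] using norm_setIntegral_le_of_norm_le_const (μ := volume)
      measure_Ioo_lt_top fun x (hx : x ∈ Ioo 0 y) => norm_cexp_neg_mul_le_one hξ hx.1.le
  have htwo : ‖1 - Complex.exp (-ξ * y)‖ ≤ 2 := (norm_sub_le _ _).trans <| by
    rw [norm_one]; linarith [norm_cexp_neg_mul_le_one hξ hy]
  rcases le_total y 1 with hy1 | hy1
  · rw [min_eq_left hy1]
    exact hlin.trans (mul_le_mul_of_nonneg_right (le_max_left _ _) hy)
  · rw [min_eq_right hy1, mul_one]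
    exact htwo.trans (le_max_right _ _)

lemma two_rpow_neg_mul_rpow_mul_rpow_le {α a κ r : ℝ} (hα : 1 ≤ α) (ha : 0 < a) (hr : 0 < r)
    (hκ : 0 < κ) (har : a ≤ κ / r) :
    2 ^ (-α) * κ ^ (1 - α) * r ^ α ≤ r * ((2 * a) ^ (-α) * a) := by
  have hleft : κ ^ (1 - α) * r ^ α = r * (κ / r) ^ (1 - α) := by
    rw [Real.div_rpow hκ.le hr.le, Real.rpow_sub hr, Real.rpow_one]
    field_simp
  have hright : (2 * a) ^ (-α) * a = 2 ^ (-α) * a ^ (1 - α) := by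
    rw [Real.mul_rpow zero_le_two ha.le, sub_eq_neg_add, Real.rpow_add ha, Real.rpow_one]
    ring
  have hmono : (κ / r) ^ (1 - α) ≤ a ^ (1 - α) :=
    Real.rpow_le_rpow_of_nonpos ha har (by linarith)
  rw [mul_assoc, hleft, hright, mul_left_comm]
  gcongr

lemma one_sub_re_cexp_neg_mul_nonneg {ξ : ℂ} (hξ : 0 ≤ ξ.re) {y : ℝ} (hy : 0 ≤ y) :
    0 ≤ 1 - (Complex.exp (-ξ * y)).re :=
  sub_nonneg.mpr ((Complex.re_le_norm _).trans (norm_cexp_neg_mul_le_one hξ hy))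

lemma one_sub_exp_neg_one_le_one_sub_re_cexp {ξ : ℂ} {y : ℝ} (hy : 1 ≤ ξ.re * y) :
    1 - Real.exp (-1) ≤ 1 - (Complex.exp (-ξ * y)).re := by
  have hre : (Complex.exp (-ξ * y)).re ≤ Real.exp (-(ξ.re * y)) := by
    simpa [Complex.norm_exp] using Complex.re_le_norm (Complex.exp (-ξ * y))
  linarith [Real.exp_le_exp.mpr (neg_le_neg hy)]

lemma one_le_one_sub_re_cexp {ξ : ℂ} {y : ℝ} (hy : 0 ≤ y) (hlo : Real.pi / 2 ≤ |ξ.im| * y)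
    (hhi : |ξ.im| * y ≤ Real.pi) :
    1 ≤ 1 - (Complex.exp (-ξ * y)).re := by
  have hcos : Real.cos (ξ.im * y) ≤ 0 := by
    rw [← Real.cos_abs, abs_mul, abs_of_nonneg hy]
    exact Real.cos_nonpos_of_pi_div_two_le_of_le hlo (by linarith [Real.pi_pos])
  have : (Complex.exp (-ξ * y)).re = Real.exp (-(ξ.re * y)) * Real.cos (ξ.im * y) := by
    simp [Complex.exp_re]
  nlinarith [Real.exp_pos (-(ξ.re * y))]

lemma integral_Ioi_mul_integral_Ioi_swap {f g : ℝ → ℂ} (hf : Continuous f) (hg : Measurable g)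
    (hfg : IntegrableOn (fun y => (∫ x in Ioo 0 y, ‖f x‖) * ‖g y‖) (Ioi 0)) :
    ∫ x in Ioi 0, f x * ∫ y in Ioi x, g y = ∫ y in Ioi 0, (∫ x in Ioo 0 y, f x) * g y := by
  set μ := volume.restrict (Ioi (0 : ℝ))
  set K : ℝ → ℝ → ℂ := fun x y => {p : ℝ × ℝ | p.1 < p.2}.indicator (fun p => f p.1 * g p.2) (x, y)
  have hK_fst : ∀ x y, K x y = (Ioi x).indicator (fun y => f x * g y) y := fun x y => by
    simp only [K, indicator_apply, mem_ofPred_eq, mem_Ioi]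
  have hK_snd : ∀ x y, K x y = (Iio y).indicator (fun x => f x * g y) x := fun x y => by
    simp only [K, indicator_apply, mem_ofPred_eq, mem_Iio]
  have hIoi_Iio : ∀ y, μ.restrict (Iio y) = volume.restrict (Ioo 0 y) := fun y => by
    rw [Measure.restrict_restrict measurableSet_Iio, Iio_inter_Ioi]
  have hK_meas : Measurable (Function.uncurry K) :=
    (by fun_prop : Measurable fun p : ℝ × ℝ => f p.1 * g p.2).indicator
      (measurableSet_lt measurable_fst measurable_snd)
  have hK_int : Integrable (Function.uncurry K) (μ.prod μ) := by
    refine (integrable_prod_iff' hK_meas.aestronglyMeasurable).mpr ⟨?_, ?_⟩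
    · refine Eventually.of_forall fun y => ?_
      simp only [Function.uncurry_apply_pair, hK_snd]
      rw [integrable_indicator_iff measurableSet_Iio, IntegrableOn, hIoi_Iio]
      exact ((hf.mul continuous_const).integrableOn_Icc).mono_set Ioo_subset_Icc_self
    · refine hfg.congr (Eventually.of_forall fun y => ?_)
      simp only [Function.uncurry_apply_pair, hK_snd, norm_indicator_eq_indicator_norm, norm_mul]
      rw [integral_indicator measurableSet_Iio, hIoi_Iio, integral_mul_const]
  calc ∫ x in Ioi 0, f x * ∫ y in Ioi x, g y
      = ∫ x, ∫ y, K x y ∂μ ∂μ := setIntegral_congr_fun measurableSet_Ioi fun x (hx : 0 < x) => by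
        simp_rw [hK_fst]
        rw [integral_indicator measurableSet_Ioi, Measure.restrict_restrict measurableSet_Ioi,
          Ioi_inter_Ioi, sup_of_le_left hx.le, integral_const_mul]
    _ = ∫ y, ∫ x, K x y ∂μ ∂μ := integral_integral_swap hK_int
    _ = ∫ y in Ioi 0, (∫ x in Ioo 0 y, f x) * g y := setIntegral_congr_fun measurableSet_Ioi
        fun y _ => by
          simp_rw [hK_snd]
          rw [integral_indicator measurableSet_Iio, hIoi_Iio, integral_mul_const]

lemma levyTail_nonneg (φ : Measure ℝ) (y : ℝ) : 0 ≤ levyTail φ y := ENNReal.toReal_nonneg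

lemma measurable_levyTail (φ : Measure ℝ) : Measurable (levyTail φ) :=
  (Antitone.measurable fun _ _ h => measure_mono (Ioi_subset_Ioi h)).ennreal_toReal

lemma exists_levyTail_bounds {φ : Measure ℝ} {α C : ℝ} (hC : 0 < C)
    (htail : Tendsto (fun x : ℝ => levyTail φ x / x ^ (-α)) (𝓝[>] 0) (𝓝 C)) :
    ∃ δ, 0 < δ ∧ δ ≤ 1 ∧ ∀ x ∈ Ioc 0 δ,
      C / 2 * x ^ (-α) ≤ levyTail φ x ∧ levyTail φ x ≤ 2 * C * x ^ (-α) := by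
  obtain ⟨u, hu, hsub⟩ := mem_nhdsGT_iff_exists_Ioc_subset.mp
    (htail (Ioo_mem_nhds (by linarith : C / 2 < C) (by linarith : C < 2 * C)))
  refine ⟨min u 1, lt_min hu one_pos, min_le_right _ _, fun x hx => ?_⟩
  have hxα : 0 < x ^ (-α) := Real.rpow_pos_of_pos hx.1 _
  obtain ⟨hlow, hup⟩ := hsub ⟨hx.1, hx.2.trans (min_le_left _ _)⟩
  exact ⟨(lt_div_iff₀ hxα).mp hlow |>.le, (div_lt_iff₀ hxα).mp hup |>.le⟩

section LevyMeasure

variable {φ : Measure ℝ}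

lemma integrableOn_levyTail_Ioi (h0 : φ (Iic 0) = 0)
    (hmom : ∫⁻ z in Ioi (0 : ℝ), ENNReal.ofReal (min (z ^ 2) z) ∂φ < ⊤)
    {δ : ℝ} (hδ : 0 < δ) (hδ1 : δ ≤ 1) :
    IntegrableOn (levyTail φ) (Ioi δ) := by
  set g : ℝ → ℝ := fun z => δ⁻¹ * min (z ^ 2) z
  have hpos : ∀ᵐ z ∂φ, z ∈ Ioi 0 := by
    rw [ae_iff]
    exact measure_mono_null (fun z (hz : ¬ 0 < z) => not_lt.mp hz) h0
  -- `g z ≥ z` on `(δ, ∞)`, so `φ((y,∞)) ≤ φ{g > y}` there; the layer-cake formula sums the latter.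
  have hle_g : ∀ y ∈ Ioi δ, φ (Ioi y) ≤ φ {z | y < g z} := by
    refine fun y hy => measure_mono fun z hz => ?_
    have hδz : δ ≤ z := (le_of_lt hy).trans (le_of_lt hz)
    have : z ≤ g z := (le_inv_mul_iff₀ hδ).mpr
      (le_min (by nlinarith) (by nlinarith))
    exact lt_of_lt_of_le hz this
  have hg_fin : ∫⁻ z, ENNReal.ofReal (g z) ∂φ < ⊤ := by
    rw [← Measure.restrict_eq_self_of_ae_mem hpos]
    simp_rw [g, ENNReal.ofReal_mul (inv_nonneg.mpr hδ.le)]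
    rw [lintegral_const_mul' _ _ ENNReal.ofReal_ne_top]
    exact ENNReal.mul_lt_top ENNReal.ofReal_lt_top hmom
  have hg_nn : 0 ≤ᵐ[φ] g := hpos.mono fun z hz =>
    mul_nonneg (inv_nonneg.mpr hδ.le) (le_min (by positivity) (le_of_lt hz))
  refine ⟨(measurable_levyTail φ).aestronglyMeasurable, ?_⟩
  rw [hasFiniteIntegral_iff_ofReal (Eventually.of_forall (levyTail_nonneg φ))]
  calc ∫⁻ y in Ioi δ, ENNReal.ofReal (levyTail φ y)
      ≤ ∫⁻ y in Ioi δ, φ {z | y < g z} :=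
        setLIntegral_mono' measurableSet_Ioi fun y hy =>
          ENNReal.ofReal_toReal_le.trans (hle_g y hy)
    _ ≤ ∫⁻ y in Ioi 0, φ {z | y < g z} := lintegral_mono_set (Ioi_subset_Ioi hδ.le)
    _ = ∫⁻ z, ENNReal.ofReal (g z) ∂φ :=
        (lintegral_eq_lintegral_meas_lt φ hg_nn (by fun_prop)).symm
    _ < ⊤ := hg_fin

lemma integrableOn_levyTail_mul_min (h0 : φ (Iic 0) = 0)
    (hmom : ∫⁻ z in Ioi (0 : ℝ), ENNReal.ofReal (min (z ^ 2) z) ∂φ < ⊤)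
    {α K δ : ℝ} (hα : α < 2) (hδ : 0 < δ) (hδ1 : δ ≤ 1)
    (hup : ∀ x ∈ Ioc 0 δ, levyTail φ x ≤ K * x ^ (-α)) :
    IntegrableOn (fun y => levyTail φ y * min y 1) (Ioi 0) := by
  have hmeas : AEStronglyMeasurable (fun y => levyTail φ y * min y 1) volume := by
    have := measurable_levyTail φ
    fun_prop
  have hnorm : ∀ y, 0 < y → ‖levyTail φ y * min y 1‖ = levyTail φ y * min y 1 := fun y hy =>
    Real.norm_of_nonneg (mul_nonneg (levyTail_nonneg φ y) (le_min hy.le zero_le_one))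
  rw [← Ioc_union_Ioi_eq_Ioi hδ.le]
  refine IntegrableOn.union ?_ ?_
  · have hmaj : IntegrableOn (fun y : ℝ => K * y ^ (1 - α)) (Ioc 0 δ) :=
      ((intervalIntegral.integrableOn_Ioo_rpow_iff hδ).mpr (by linarith)).congr_set_ae
        Ioo_ae_eq_Ioc.symm |>.const_mul K
    refine hmaj.mono' hmeas.restrict <| (ae_restrict_iff' measurableSet_Ioc).mpr <|
      Eventually.of_forall fun y hy => ?_
    rw [hnorm y hy.1, sub_eq_neg_add, Real.rpow_add hy.1, Real.rpow_one, ← mul_assoc]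
    exact mul_le_mul (hup y hy) (min_le_left _ _) (le_min hy.1.le zero_le_one)
      ((levyTail_nonneg φ y).trans (hup y hy))
  · refine (integrableOn_levyTail_Ioi h0 hmom hδ hδ1).mono' hmeas.restrict <|
      (ae_restrict_iff' measurableSet_Ioi).mpr <| Eventually.of_forall fun y hy => ?_
    rw [hnorm y (hδ.trans hy)]
    exact mul_le_of_le_one_right (levyTail_nonneg φ y) (min_le_right _ _)

def levyTailTransform (φ : Measure ℝ) (ξ : ℂ) : ℂ :=
  ∫ y in Ioi 0, (levyTail φ y : ℂ) * (1 - Complex.exp (-ξ * y))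

lemma integrableOn_levyTail_mul_one_sub_cexp
    (hT : IntegrableOn (fun y => levyTail φ y * min y 1) (Ioi 0)) {ξ : ℂ} (hξ : 0 ≤ ξ.re) :
    IntegrableOn (fun y : ℝ => (levyTail φ y : ℂ) * (1 - Complex.exp (-ξ * y))) (Ioi 0) := by
  have hmeas := measurable_levyTail φ
  refine (hT.const_mul (max ‖ξ‖ 2)).mono' (by fun_prop) <|
    (ae_restrict_iff' measurableSet_Ioi).mpr <| Eventually.of_forall fun y (hy : 0 < y) => ?_
  rw [norm_mul, Complex.norm_real, Real.norm_of_nonneg (levyTail_nonneg φ y), mul_left_comm]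
  exact mul_le_mul_of_nonneg_left (norm_one_sub_cexp_neg_mul_le hξ hy.le) (levyTail_nonneg φ y)

lemma integral_Ioo_norm_cexp_neg_mul {ξ : ℂ} (hξ : ξ.re ≠ 0) {y : ℝ} (hy : 0 ≤ y) :
    ∫ x in Ioo 0 y, ‖Complex.exp (-ξ * x)‖ = ‖(1 - Complex.exp (-ξ.re * y)) / ξ.re‖ := by
  have hre : ∀ x : ℝ, (‖Complex.exp (-ξ * x)‖ : ℂ) = Complex.exp (-ξ.re * x) := fun x => by
    rw [Complex.norm_exp, Complex.ofReal_exp]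
    simp
  rw [← integral_Ioo_cexp_neg_mul (Complex.ofReal_ne_zero.mpr hξ) hy]
  simp_rw [← hre]
  rw [integral_complex_ofReal, Complex.norm_real, Real.norm_of_nonneg (by positivity)]

lemma psiFn_eq_mul_levyTailTransform (hT : IntegrableOn (fun y => levyTail φ y * min y 1) (Ioi 0))
    {ξ : ℂ} (hξ : 0 < ξ.re) :
    psiFn φ ξ = ξ * levyTailTransform φ ξ := by
  have hξ0 : ξ ≠ 0 := fun h => by simp [h] at hξ
  have hPhi : ∀ x ∈ Ioi (0 : ℝ), (PhiFn φ x : ℂ) = ∫ y in Ioi x, (levyTail φ y : ℂ) :=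
    fun x hx => by rw [PhiFn, if_pos (mem_Ioi.mp hx), integral_complex_ofReal]
  have hkernel : IntegrableOn
      (fun y : ℝ => (∫ x in Ioo 0 y, ‖Complex.exp (-ξ * x)‖) * ‖(levyTail φ y : ℂ)‖) (Ioi 0) := by
    have hreal := integrableOn_levyTail_mul_one_sub_cexp hT (ξ := ξ.re) (by simpa using hξ.le)
    refine IntegrableOn.congr_fun (hreal.norm.div_const ξ.re) (fun y (hy : 0 < y) => ?_)
      measurableSet_Ioi
    rw [integral_Ioo_norm_cexp_neg_mul hξ.ne' hy.le, norm_mul, norm_div,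
      Complex.norm_real, Complex.norm_real, Real.norm_of_nonneg hξ.le]
    ring
  have hmeas := measurable_levyTail φ
  unfold psiFn
  rw [setIntegral_congr_fun measurableSet_Ioi fun x hx => by rw [hPhi x hx],
    integral_Ioi_mul_integral_Ioi_swap (by fun_prop) (by fun_prop) hkernel,
    setIntegral_congr_fun measurableSet_Ioi fun y (hy : 0 < y) => by
      rw [integral_Ioo_cexp_neg_mul hξ0 hy.le, div_mul_eq_mul_div, mul_comm, mul_div_assoc,
        ← mul_div_assoc, div_eq_mul_inv, mul_comm],
    integral_const_mul, levyTailTransform]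
  field_simp

lemma re_levyTailTransform
    (hT : IntegrableOn (fun y => levyTail φ y * min y 1) (Ioi 0)) {ξ : ℂ} (hξ : 0 ≤ ξ.re) :
    (levyTailTransform φ ξ).re =
      ∫ y in Ioi 0, levyTail φ y * (1 - (Complex.exp (-ξ * y)).re) := by
  have h := integral_re (integrableOn_levyTail_mul_one_sub_cexp hT hξ)
  rw [levyTailTransform]
  simp only [RCLike.re_to_complex, Complex.re_ofReal_mul, Complex.sub_re, Complex.one_re] at h
  exact h.symm

lemma rpow_le_mul_re_levyTailTransform
    (hT : IntegrableOn (fun y => levyTail φ y * min y 1) (Ioi 0)) {ξ : ℂ} (hξ : 0 ≤ ξ.re)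
    {α c δ a κ r c₀ : ℝ} (hα : 1 ≤ α) (hc : 0 ≤ c)
    (hlow : ∀ x ∈ Ioc 0 δ, c * x ^ (-α) ≤ levyTail φ x)
    (ha : 0 < a) (h2a : 2 * a ≤ δ) (hr : 0 < r) (hκ : 0 < κ) (har : a ≤ κ / r) (hc₀ : 0 ≤ c₀)
    (hgap : ∀ y ∈ Icc a (2 * a), c₀ ≤ 1 - (Complex.exp (-ξ * y)).re) :
    c₀ * c * 2 ^ (-α) * κ ^ (1 - α) * r ^ α ≤
      r * (levyTailTransform φ ξ).re := by
  set f : ℝ → ℝ := fun y => levyTail φ y * (1 - (Complex.exp (-ξ * y)).re)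
  have hf : IntegrableOn f (Ioi 0) := by
    have h := (integrableOn_levyTail_mul_one_sub_cexp hT hξ).re
    simp only [RCLike.re_to_complex, Complex.re_ofReal_mul, Complex.sub_re, Complex.one_re] at h
    exact h
  have hsub : Icc a (2 * a) ⊆ Ioi 0 := fun y hy => ha.trans_le hy.1
  have hIcc : c₀ * c * (2 * a) ^ (-α) * a ≤ ∫ y in Icc a (2 * a), f y := by
    have hpt : ∀ y ∈ Icc a (2 * a), c * (2 * a) ^ (-α) * c₀ ≤ f y := fun y hy => by
      have hy0 : 0 < y := ha.trans_le hy.1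
      refine mul_le_mul ?_ (hgap y hy) hc₀ (levyTail_nonneg φ y)
      exact (mul_le_mul_of_nonneg_left
        (Real.rpow_le_rpow_of_nonpos hy0 hy.2 (by linarith)) hc).trans
        (hlow y ⟨hy0, hy.2.trans h2a⟩)
    have := setIntegral_ge_of_const_le_real measurableSet_Icc measure_Icc_lt_top.ne hpt
      (hf.mono_set hsub)
    rw [Measure.real, Real.volume_Icc, ENNReal.toReal_ofReal (by linarith), two_mul a,
      add_sub_cancel_right, ← two_mul] at this
    linarith
  have hmono : ∫ y in Icc a (2 * a), f y ≤ ∫ y in Ioi 0, f y :=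
    setIntegral_mono_set hf ((ae_restrict_iff' measurableSet_Ioi).mpr <|
      Eventually.of_forall fun y (hy : 0 < y) =>
        mul_nonneg (levyTail_nonneg φ y) (one_sub_re_cexp_neg_mul_nonneg hξ hy.le))
      hsub.eventuallyLE
  rw [re_levyTailTransform hT hξ]
  calc c₀ * c * 2 ^ (-α) * κ ^ (1 - α) * r ^ α
      = c₀ * c * (2 ^ (-α) * κ ^ (1 - α) * r ^ α) := by ring
    _ ≤ c₀ * c * (r * ((2 * a) ^ (-α) * a)) := mul_le_mul_of_nonneg_left
        (two_rpow_neg_mul_rpow_mul_rpow_le hα ha hr hκ har) (mul_nonneg hc₀ hc)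
    _ = r * (c₀ * c * (2 * a) ^ (-α) * a) := by ring
    _ ≤ r * ∫ y in Ioi 0, f y := by gcongr; exact hIcc.trans hmono

lemma rpow_le_mul_re_levyTailTransform_of_re
    (hT : IntegrableOn (fun y => levyTail φ y * min y 1) (Ioi 0)) {ξ : ℂ} {α c δ : ℝ}
    (hα : 1 ≤ α) (hc : 0 ≤ c) (hlow : ∀ x ∈ Ioc 0 δ, c * x ^ (-α) ≤ levyTail φ x)
    (hδ : 0 < δ) (hre : ‖ξ‖ / 2 ≤ ξ.re) (hR : 4 / δ ≤ ‖ξ‖) :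
    (1 - Real.exp (-1)) * c * 2 ^ (-α) * 2 ^ (1 - α) * ‖ξ‖ ^ α ≤
      ‖ξ‖ * (levyTailTransform φ ξ).re := by
  have hr : 0 < ‖ξ‖ := (div_pos four_pos hδ).trans_le hR
  have ht : 0 < ξ.re := (half_pos hr).trans_le hre
  refine rpow_le_mul_re_levyTailTransform hT ht.le hα hc hlow (one_div_pos.mpr ht) ?_ hr
    two_pos ?_ (by linarith [Real.exp_lt_one_iff.mpr neg_one_lt_zero]) fun y hy => ?_
  · rw [mul_one_div, div_le_iff₀ ht]
    rw [div_le_iff₀ hδ] at hR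
    nlinarith [mul_le_mul_of_nonneg_left hre hδ.le]
  · rw [div_le_div_iff₀ ht hr]
    linarith
  · refine one_sub_exp_neg_one_le_one_sub_re_cexp ?_
    rw [← div_le_iff₀' ht]
    exact hy.1

lemma rpow_le_mul_re_levyTailTransform_of_im
    (hT : IntegrableOn (fun y => levyTail φ y * min y 1) (Ioi 0)) {ξ : ℂ} (hξ : 0 ≤ ξ.re)
    {α c δ : ℝ} (hα : 1 ≤ α) (hc : 0 ≤ c) (hlow : ∀ x ∈ Ioc 0 δ, c * x ^ (-α) ≤ levyTail φ x)
    (hδ : 0 < δ) (him : ‖ξ‖ / 2 ≤ |ξ.im|) (hR : 2 * Real.pi / δ ≤ ‖ξ‖) :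
    1 * c * 2 ^ (-α) * Real.pi ^ (1 - α) * ‖ξ‖ ^ α ≤
      ‖ξ‖ * (levyTailTransform φ ξ).re := by
  have hr : 0 < ‖ξ‖ := (div_pos (by positivity) hδ).trans_le hR
  have hσ : 0 < |ξ.im| := (half_pos hr).trans_le him
  refine rpow_le_mul_re_levyTailTransform hT hξ hα hc hlow (a := Real.pi / (2 * |ξ.im|))
    (by positivity) ?_ hr Real.pi_pos ?_ zero_le_one fun y hy => ?_
  · rw [mul_div_assoc', mul_div_mul_left _ _ two_ne_zero, div_le_iff₀ hσ]
    rw [div_le_iff₀ hδ] at hR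
    nlinarith [mul_le_mul_of_nonneg_left him hδ.le]
  · exact div_le_div_of_nonneg_left Real.pi_pos.le hr (by linarith)
  · have hy0 : 0 < y := (by positivity : (0 : ℝ) < Real.pi / (2 * |ξ.im|)).trans_le hy.1
    refine one_le_one_sub_re_cexp hy0.le ?_ ?_
    · have := hy.1
      rw [div_le_iff₀ (by positivity)] at this
      linarith
    · have := hy.2
      rw [mul_div_assoc', mul_div_mul_left _ _ two_ne_zero, le_div_iff₀ hσ] at this
      linarith

end LevyMeasure

/-- Abelian lower bound `|ψ(ξ)| ≥ b |ξ|^α` for large `|ξ|` in the right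
half-plane, under the stable-like tail assumption. -/
theorem abelian_lower_bound (φ : Measure ℝ) (hH0 : H0 φ) (α C : ℝ)
    (hα1 : 1 < α) (hα2 : α < 2) (hC : 0 < C)
    (htail : Tendsto (fun x : ℝ => levyTail φ x / x ^ (-α))
      (nhdsWithin 0 (Ioi 0)) (nhds C)) :
    ∃ b : ℝ, 0 < b ∧ ∃ R : ℝ, 0 < R ∧
      ∀ ξ : ℂ, 0 < ξ.re → R ≤ ‖ξ‖ →
        b * ‖ξ‖ ^ α ≤ ‖psiFn φ ξ‖ := by
  obtain ⟨h0, hmom, -⟩ := hH0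
  obtain ⟨δ, hδ, hδ1, hbounds⟩ := exists_levyTail_bounds hC htail
  have hT := integrableOn_levyTail_mul_min h0 hmom hα2 hδ hδ1 fun x hx => (hbounds x hx).2
  have hlow : ∀ x ∈ Ioc 0 δ, C / 2 * x ^ (-α) ≤ levyTail φ x := fun x hx => (hbounds x hx).1
  set b₁ := (1 - Real.exp (-1)) * (C / 2) * 2 ^ (-α) * 2 ^ (1 - α)
  set b₂ := 1 * (C / 2) * 2 ^ (-α) * Real.pi ^ (1 - α)
  have hb₁ : 0 < b₁ := by
    have : 0 < 1 - Real.exp (-1) := by linarith [Real.exp_lt_one_iff.mpr neg_one_lt_zero]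
    positivity
  refine ⟨min b₁ b₂, lt_min hb₁ (by positivity), 2 * Real.pi / δ, by positivity,
    fun ξ hξ hR => ?_⟩
  rw [psiFn_eq_mul_levyTailTransform hT hξ, norm_mul]
  refine le_trans ?_ (mul_le_mul_of_nonneg_left (Complex.re_le_norm _) (norm_nonneg ξ))
  have hsplit := Complex.norm_le_abs_re_add_abs_im ξ
  rw [abs_of_pos hξ] at hsplit
  rcases le_or_gt (‖ξ‖ / 2) ξ.re with hre | hre
  · have hR' : 4 / δ ≤ ‖ξ‖ := le_trans (by gcongr; linarith [Real.pi_gt_three]) hR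
    exact (mul_le_mul_of_nonneg_right (min_le_left _ _) (by positivity)).trans
      (rpow_le_mul_re_levyTailTransform_of_re hT hα1.le (by positivity) hlow hδ hre hR')
  · exact (mul_le_mul_of_nonneg_right (min_le_right _ _) (by positivity)).trans
      (rpow_le_mul_re_levyTailTransform_of_im hT hξ.le hα1.le (by positivity) hlow hδ
        (by linarith) hR)
end
end

section
/- Discrete convolution identities: under (H0), for every h > 0 and every integer m ≥ 0, the Grünwald-type coefficients satisfy: Σ_{j=0}^m G^{k_{−1}}_{m−j,h} G^ψ_{j,h} equals 1/h if m = 0, equals −1/h if m = 1, and equals 0 if m ≥ 2; Σ_{j=0}^m G^{k_0}_{m−j,h} G^ψ_{j,h} = Σ_{j=0}^m G^{k_{−1}}_{m−j,h} G^{ψ−1}_{j,h}, and both equal 1 if m = 0 and 0 if m ≥ 1; Σ_{j=0}^m G^{k_1}_{m−j,h} G^ψ_{j,h} = Σ_{j=0}^m G^{k_0}_{m−j,h} G^{ψ−1}_{j,h} = h for all m ≥ 0; and Σ_{j=0}^m G^{k_1}_{m−j,h} G^{ψ−1}_{j,h} = (m+1) h² for all m ≥ 0. -/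
open MeasureTheory Set Filter Topology

noncomputable section

/-- Grünwald-type coefficients `G^ψ_{j,h} = ((-1)^j/(j! h^j)) ψ^{(j)}(1/h)`. -/
def grunPsi (φ : Measure ℝ) (j : ℕ) (h : ℝ) : ℝ :=
  (((-1 : ℂ) ^ j / ((Nat.factorial j : ℂ) * (h : ℂ) ^ j)) *
    iteratedDeriv j (psiFn φ) ((1 : ℂ) / (h : ℂ))).re

/-- Grünwald-type coefficients of order `ψ - 1`:
`G^{ψ-1}_{j,h} = ((-1)^j/(j! h^j)) (d^j/dξ^j)(ψ(ξ)/ξ)|_{ξ=1/h}`. -/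
def grunPsiM1 (φ : Measure ℝ) (j : ℕ) (h : ℝ) : ℝ :=
  (((-1 : ℂ) ^ j / ((Nat.factorial j : ℂ) * (h : ℂ) ^ j)) *
    iteratedDeriv j (fun ξ : ℂ => psiFn φ ξ / ξ) ((1 : ℂ) / (h : ℂ))).re

/-- Grünwald-type coefficients for the scale functions:
`G^{k_i}_{j,h} = ((-1)^j/(j! h^j)) (d^j/dξ^j)(ξ^{-i}/ψ(ξ))|_{ξ=1/h}` for `i ∈ {1,0,-1,-2}`. -/
def grunK (φ : Measure ℝ) (i : ℤ) (j : ℕ) (h : ℝ) : ℝ :=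
  (((-1 : ℂ) ^ j / ((Nat.factorial j : ℂ) * (h : ℂ) ^ j)) *
    iteratedDeriv j (fun ξ : ℂ => ξ ^ (-i) / psiFn φ ξ) ((1 : ℂ) / (h : ℂ))).re

open scoped ENNReal
open Complex ComplexConjugate

/-!
Write `G^F_{j,h} = ((-1)^j / (j! h^j)) F^{(j)}(1/h)`: it is the `j`-th Taylor coefficient at `t = 0`
of `t ↦ F((1 - t)/h)`. By Leibniz's rule these coefficients turn products of functions into
Cauchy products of sequences, so each convolution is the coefficient sequence of
`(ξ^{-i}/ψ) · ψ = ξ^{-i}` or of `(ξ^{-i}/ψ) · (ψ/ξ) = ξ^{-i-1}`, as soon as `ψ` is holomorphic near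
`1/h` and `ψ(1/h) ≠ 0`. Since `ξ^k = h^{-k} (1 - t)^k` at `ξ = (1 - t)/h`, the coefficients of `ξ^k`
are binomial coefficients, which gives the stated values. Taking real parts term by term is
legitimate because every function involved commutes with complex conjugation, so its derivatives
at the real point `1/h` are real.

Under (H0), Tonelli gives `Φ(x) = ∫ (z - x)⁺ φ(dz)` and
`∫₀^∞ e^{-cx} Φ(x) dx ≤ K_c ∫ (z² ∧ z) φ(dz)`, which makes the Laplace integral in `ψ` holomorphic
on `Re ξ > 0`; and `ψ(t) > 0` for `t > 0` because `∫_{(0,1)} z φ(dz) = ∞` forces `φ ≠ 0`, hence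
`Φ > 0`, near `0`.
-/

theorem sum_pow_div_factorial_mul_iteratedDeriv_mul {𝕜 : Type*} [NontriviallyNormedField 𝕜]
    [CharZero 𝕜] {f g : 𝕜 → 𝕜} {x : 𝕜} {n : ℕ} (hf : ContDiffAt 𝕜 n f x) (hg : ContDiffAt 𝕜 n g x)
    (c : 𝕜) :
    ∑ j ∈ Finset.range (n + 1),
        c ^ (n - j) / (n - j).factorial * iteratedDeriv (n - j) f x *
          (c ^ j / j.factorial * iteratedDeriv j g x) =
      c ^ n / n.factorial * iteratedDeriv n (fun z => f z * g z) x := by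
  rw [iteratedDeriv_fun_mul hf hg, Finset.mul_sum, ← Finset.sum_range_reflect]
  refine Finset.sum_congr rfl fun j hj => ?_
  obtain ⟨k, rfl⟩ : ∃ k, n = j + k := ⟨n - j, by grind⟩
  simp only [show j + k + 1 - 1 - j = k by omega, show j + k - k = j by omega,
    Nat.cast_add_choose, Nat.add_sub_cancel_left]
  have : ((j + k).factorial : 𝕜) ≠ 0 := Nat.cast_ne_zero.2 (Nat.factorial_ne_zero _)
  field_simp
  ring

theorem iteratedDeriv_conj_conj (f : ℂ → ℂ) (n : ℕ) :
    iteratedDeriv n (conj ∘ f ∘ conj) = conj ∘ iteratedDeriv n f ∘ conj := by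
  induction n with
  | zero => simp
  | succ n ih => rw [iteratedDeriv_succ, ih, deriv_conj_conj, iteratedDeriv_succ]

theorem conj_iteratedDeriv_ofReal {f : ℂ → ℂ} (hf : ∀ z, f (conj z) = conj (f z)) (n : ℕ)
    (x : ℝ) : conj (iteratedDeriv n f x) = iteratedDeriv n f x := by
  have hsymm : conj ∘ f ∘ conj = f := funext fun z => by simp [hf]
  simpa [hsymm] using (congrFun (iteratedDeriv_conj_conj f n) x).symm

/-- The coefficient `G^F_{j,h}`; `grunPsi`, `grunPsiM1` and `grunK φ i` are, by definition, the real
parts of `grunCoeff` applied to `ψ`, `ψ(ξ)/ξ` and `ξ^{-i}/ψ(ξ)`. -/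
noncomputable def grunCoeff (F : ℂ → ℂ) (j : ℕ) (h : ℝ) : ℂ :=
  ((-1 : ℂ) ^ j / ((Nat.factorial j : ℂ) * (h : ℂ) ^ j)) * iteratedDeriv j F ((1 : ℂ) / (h : ℂ))

theorem grunCoeff_eq_neg_inv_pow (F : ℂ → ℂ) (j : ℕ) (h : ℝ) :
    grunCoeff F j h = (-(h : ℂ)⁻¹) ^ j / j.factorial * iteratedDeriv j F (1 / h) := by
  rw [grunCoeff, neg_pow (h : ℂ)⁻¹, inv_pow]
  ring

theorem sum_grunCoeff_mul {F G : ℂ → ℂ} {m : ℕ} {h : ℝ} (hF : ContDiffAt ℂ m F (1 / h))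
    (hG : ContDiffAt ℂ m G (1 / h)) :
    ∑ j ∈ Finset.range (m + 1), grunCoeff F (m - j) h * grunCoeff G j h =
      grunCoeff (fun z => F z * G z) m h := by
  simp only [grunCoeff_eq_neg_inv_pow]
  exact sum_pow_div_factorial_mul_iteratedDeriv_mul hF hG _

theorem conj_grunCoeff {F : ℂ → ℂ} (hF : ∀ z, F (conj z) = conj (F z)) (j : ℕ) (h : ℝ) :
    conj (grunCoeff F j h) = grunCoeff F j h := by
  have hx : (1 / h : ℂ) = ((1 / h : ℝ) : ℂ) := by push_cast; rfl
  rw [grunCoeff_eq_neg_inv_pow, hx, map_mul, conj_iteratedDeriv_ofReal hF]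
  simp [map_div₀]

theorem sum_re_grunCoeff_mul {F G : ℂ → ℂ} {m : ℕ} {h : ℝ}
    (hFc : ∀ z, F (conj z) = conj (F z)) (hGc : ∀ z, G (conj z) = conj (G z))
    (hF : ContDiffAt ℂ m F (1 / h)) (hG : ContDiffAt ℂ m G (1 / h)) :
    ∑ j ∈ Finset.range (m + 1), (grunCoeff F (m - j) h).re * (grunCoeff G j h).re =
      (grunCoeff (fun z => F z * G z) m h).re := by
  rw [← sum_grunCoeff_mul hF hG, Complex.re_sum]
  refine Finset.sum_congr rfl fun j _ => ?_
  rw [← Complex.conj_eq_iff_re.1 (conj_grunCoeff hFc (m - j) h),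
    ← Complex.conj_eq_iff_re.1 (conj_grunCoeff hGc j h)]
  simp

theorem grunCoeff_zpow {h : ℝ} (hh : h ≠ 0) (k : ℤ) (m : ℕ) :
    grunCoeff (fun ξ => ξ ^ k) m h =
      ((∏ i ∈ Finset.range m, ((i : ℝ) - k)) / m.factorial * h ^ (-k) : ℝ) := by
  have hh' : (h : ℂ) ≠ 0 := Complex.ofReal_ne_zero.2 hh
  have hprod : ∏ i ∈ Finset.range m, ((i : ℂ) - k) =
      (-1) ^ m * ∏ i ∈ Finset.range m, ((k : ℂ) - i) := by
    simpa [Finset.card_range] using Finset.prod_neg (s := Finset.range m) fun i => (k : ℂ) - i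
  rw [grunCoeff, iteratedDeriv_eq_iterate, iter_deriv_zpow, one_div, inv_zpow', neg_sub,
    zpow_sub₀ hh', zpow_natCast]
  push_cast
  rw [hprod, zpow_neg]
  field_simp

theorem grunCoeff_congr {F G : ℂ → ℂ} {h : ℝ} (hFG : F =ᶠ[𝓝 ((1 : ℂ) / h)] G) (j : ℕ) :
    grunCoeff F j h = grunCoeff G j h := by
  rw [grunCoeff, grunCoeff, hFG.iteratedDeriv_eq]

theorem re_grunCoeff_zpow_natCast {h : ℝ} (hh : h ≠ 0) (n m : ℕ) :
    (grunCoeff (fun ξ => ξ ^ (n : ℤ)) m h).re = (-1) ^ m * n.choose m / h ^ n := by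
  have hprod : ∏ i ∈ Finset.range m, ((i : ℝ) - (n : ℤ)) =
      (-1) ^ m * (m.factorial * n.choose m) := by
    rw [← Nat.cast_mul, ← Nat.descFactorial_eq_factorial_mul_choose,
      ← descPochhammer_eval_eq_descFactorial ℝ, descPochhammer_eval_eq_prod_range]
    simpa [Finset.card_range] using Finset.prod_neg (s := Finset.range m) fun i => (n : ℝ) - i
  rw [grunCoeff_zpow hh, Complex.ofReal_re, hprod, zpow_neg, zpow_natCast]
  field_simp

theorem re_grunCoeff_zpow_neg_natCast_succ {h : ℝ} (hh : h ≠ 0) (k m : ℕ) :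
    (grunCoeff (fun ξ => ξ ^ (-((k : ℤ) + 1))) m h).re = (m + k).choose k * h ^ (k + 1) := by
  have hprod : ∏ i ∈ Finset.range m, ((i : ℝ) - (-((k : ℤ) + 1) : ℤ)) =
      m.factorial * (m + k).choose k := by
    rw [← Nat.cast_mul, ← Nat.choose_symm_add, add_comm m k,
      ← Nat.ascFactorial_eq_factorial_mul_choose,
      Nat.ascFactorial_eq_prod_range]
    push_cast
    exact Finset.prod_congr rfl fun i _ => by ring
  rw [grunCoeff_zpow hh, Complex.ofReal_re, hprod, neg_neg, zpow_add_one₀ hh, zpow_natCast]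
  field_simp
  ring

theorem iUnion_Ioi_one_div_add_one : ⋃ n : ℕ, Ioi (1 / ((n : ℝ) + 1)) = Ioi 0 := by
  ext x
  simp only [mem_iUnion, mem_Ioi]
  exact ⟨fun ⟨n, hn⟩ => lt_trans Nat.one_div_pos_of_nat hn, exists_nat_one_div_lt⟩

theorem setLIntegral_measure_Ioi (μ : Measure ℝ) [SFinite μ] (x : ℝ) :
    ∫⁻ y in Ioi x, μ (Ioi y) = ∫⁻ z, ENNReal.ofReal (z - x) ∂μ := by
  have hmeas : Measurable (Function.uncurry fun y z : ℝ => (Iio z).indicator (1 : ℝ → ℝ≥0∞) y) :=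
    (measurable_const.indicator (measurableSet_lt measurable_fst measurable_snd) :
      Measurable ({p : ℝ × ℝ | p.1 < p.2}.indicator 1))
  calc ∫⁻ y in Ioi x, μ (Ioi y)
      = ∫⁻ y in Ioi x, (∫⁻ z, (Iio z).indicator 1 y ∂μ) := by
        refine lintegral_congr fun y => ?_
        rw [← lintegral_indicator_one measurableSet_Ioi]
        exact lintegral_congr fun z => by simp [indicator_apply]
    _ = ∫⁻ z, (∫⁻ y in Ioi x, (Iio z).indicator 1 y) ∂μ :=
        lintegral_lintegral_swap hmeas.aemeasurable
    _ = ∫⁻ z, ENNReal.ofReal (z - x) ∂μ := by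
        refine lintegral_congr fun z => ?_
        rw [lintegral_indicator_one measurableSet_Iio, Measure.restrict_apply measurableSet_Iio,
          Iio_inter_Ioi, Real.volume_Ioo]

theorem PhiFn_nonneg (φ : Measure ℝ) (x : ℝ) : 0 ≤ PhiFn φ x := by
  unfold PhiFn
  split_ifs
  · exact setIntegral_nonneg measurableSet_Ioi fun _ _ => ENNReal.toReal_nonneg
  · exact le_rfl

theorem setLIntegral_exp_mul_sub_le_sq {c z : ℝ} (hc : 0 ≤ c) (hz : 0 ≤ z) :
    ∫⁻ x in Ioi 0, ENNReal.ofReal (Real.exp (-(c * x))) * ENNReal.ofReal (z - x)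
      ≤ ENNReal.ofReal (z ^ 2) := by
  calc _ ≤ ∫⁻ x in Ioi 0, (Iic z).indicator (fun _ => ENNReal.ofReal z) x := by
        refine lintegral_mono_ae ?_
        filter_upwards [ae_restrict_mem measurableSet_Ioi] with x (hx : 0 < x)
        rcases le_or_gt x z with hxz | hxz
        · rw [indicator_of_mem (mem_Iic.2 hxz)]
          calc _ ≤ 1 * ENNReal.ofReal z := by
                gcongr
                · exact ENNReal.ofReal_le_one.2 (Real.exp_le_one_iff.2 (by nlinarith))
                · linarith
            _ = _ := one_mul _
        · rw [ENNReal.ofReal_of_nonpos (by linarith : z - x ≤ 0), mul_zero]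
          exact zero_le
    _ = ENNReal.ofReal (z ^ 2) := by
        rw [lintegral_indicator_const measurableSet_Iic, Measure.restrict_apply measurableSet_Iic,
          Iic_inter_Ioi, Real.volume_Ioc, sub_zero, ← ENNReal.ofReal_mul hz, sq]

theorem setLIntegral_exp_mul_sub_le_mul (c z : ℝ) :
    ∫⁻ x in Ioi 0, ENNReal.ofReal (Real.exp (-(c * x))) * ENNReal.ofReal (z - x)
      ≤ (∫⁻ x in Ioi 0, ENNReal.ofReal (Real.exp (-(c * x)))) * ENNReal.ofReal z := by
  rw [← lintegral_mul_const' _ _ ENNReal.ofReal_ne_top]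
  refine lintegral_mono_ae ?_
  filter_upwards [ae_restrict_mem measurableSet_Ioi] with x (hx : 0 < x)
  gcongr
  linarith

theorem exists_setLIntegral_exp_mul_sub_le {c : ℝ} (hc : 0 < c) :
    ∃ K < ∞, ∀ z : ℝ, ∫⁻ x in Ioi 0, ENNReal.ofReal (Real.exp (-(c * x))) * ENNReal.ofReal (z - x)
      ≤ K * ENNReal.ofReal (min (z ^ 2) z) := by
  set E := ∫⁻ x in Ioi (0 : ℝ), ENNReal.ofReal (Real.exp (-(c * x)))
  have hE : E < ∞ := by
    have hint : IntegrableOn (fun x => Real.exp (-(c * x))) (Ioi 0) := by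
      simpa [neg_mul] using exp_neg_integrableOn_Ioi 0 hc
    exact (hasFiniteIntegral_iff_ofReal (ae_of_all _ fun x => (Real.exp_pos _).le)).1
      hint.hasFiniteIntegral
  refine ⟨max 1 E, max_lt ENNReal.one_lt_top hE, fun z => ?_⟩
  rcases le_or_gt z 0 with hz | hz
  · have hzero : ∀ x ∈ Ioi (0 : ℝ),
        ENNReal.ofReal (Real.exp (-(c * x))) * ENNReal.ofReal (z - x) = 0 := fun x hx => by
      rw [ENNReal.ofReal_of_nonpos (by linarith [mem_Ioi.1 hx] : z - x ≤ 0), mul_zero]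
    rw [setLIntegral_congr_fun measurableSet_Ioi hzero, lintegral_zero]
    exact zero_le
  rcases le_total z 1 with hz1 | hz1
  · rw [min_eq_left (by nlinarith)]
    exact (setLIntegral_exp_mul_sub_le_sq hc.le hz.le).trans
      (le_mul_of_one_le_left zero_le (le_max_left _ _))
  · rw [min_eq_right (by nlinarith)]
    exact (setLIntegral_exp_mul_sub_le_mul c z).trans (by gcongr; exact le_max_right _ _)

theorem mul_exp_neg_le {c : ℝ} (hc : 0 < c) (x : ℝ) :
    x * Real.exp (-(2 * c * x)) ≤ c⁻¹ * Real.exp (-(c * x)) := by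
  have hx : x ≤ c⁻¹ * Real.exp (c * x) := by
    rw [inv_mul_eq_div, le_div_iff₀ hc]
    nlinarith [Real.add_one_le_exp (c * x)]
  calc x * Real.exp (-(2 * c * x)) ≤ c⁻¹ * Real.exp (c * x) * Real.exp (-(2 * c * x)) := by
        gcongr
    _ = c⁻¹ * Real.exp (-(c * x)) := by
        rw [mul_assoc, ← Real.exp_add]
        ring_nf

theorem norm_cexp_neg_mul_ofReal (ξ : ℂ) (x : ℝ) : ‖cexp (-ξ * x)‖ = Real.exp (-(ξ.re * x)) := by
  simp [Complex.norm_exp]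

theorem differentiableOn_integral_cexp_neg_mul {f : ℝ → ℂ}
    (hf : AEStronglyMeasurable f (volume.restrict (Ioi 0)))
    (hint : ∀ c > 0, IntegrableOn (fun x => Real.exp (-(c * x)) * ‖f x‖) (Ioi 0)) :
    DifferentiableOn ℂ (fun ξ => ∫ x in Ioi (0 : ℝ), cexp (-ξ * x) * f x) {ξ | 0 < ξ.re} := by
  intro ξ₀ hξ₀
  set c := ξ₀.re
  have hc : 0 < c := hξ₀
  have hmeas (ξ : ℂ) :
      AEStronglyMeasurable (fun x : ℝ => cexp (-ξ * x)) (volume.restrict (Ioi 0)) :=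
    (by fun_prop : Continuous fun x : ℝ => cexp (-ξ * x)).aestronglyMeasurable
  have hre : ∀ ξ ∈ Metric.ball ξ₀ (c / 2), c / 2 ≤ ξ.re := fun ξ hξ => by
    have := (abs_le.1 ((Complex.abs_re_le_norm (ξ - ξ₀)).trans (mem_ball_iff_norm.1 hξ).le)).1
    rw [Complex.sub_re] at this
    linarith
  refine (hasDerivAt_integral_of_dominated_loc_of_deriv_le
    (F' := fun ξ (x : ℝ) => cexp (-ξ * x) * -(x : ℂ) * f x)
    (bound := fun x : ℝ => x * Real.exp (-(c / 2 * x)) * ‖f x‖)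
    (Metric.ball_mem_nhds ξ₀ (half_pos hc)) (Eventually.of_forall fun ξ => (hmeas ξ).mul hf)
    ?_ (((hmeas ξ₀).mul continuous_ofReal.neg.aestronglyMeasurable).mul hf)
    ?_ ?_ ?_).2.differentiableAt.differentiableWithinAt
  · refine (hint c hc).mono' ((hmeas ξ₀).mul hf) (ae_of_all _ fun x => ?_)
    rw [Pi.mul_apply, norm_mul, norm_cexp_neg_mul_ofReal]
  · filter_upwards [ae_restrict_mem measurableSet_Ioi] with x (hx : 0 < x) ξ hξ
    rw [norm_mul, norm_mul, norm_cexp_neg_mul_ofReal, norm_neg, Complex.norm_real,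
      Real.norm_of_nonneg hx.le, mul_comm (Real.exp _) x]
    gcongr
    nlinarith [hre ξ hξ]
  · refine ((hint (c / 4) (by positivity)).const_mul (c / 4)⁻¹).mono'
      ((by fun_prop : Continuous fun x : ℝ => x * Real.exp (-(c / 2 * x))).aestronglyMeasurable.mul
        hf.norm) ?_
    filter_upwards [ae_restrict_mem measurableSet_Ioi] with x (hx : 0 < x)
    have hle : x * Real.exp (-(c / 2 * x)) ≤ (c / 4)⁻¹ * Real.exp (-(c / 4 * x)) := by
      convert mul_exp_neg_le (c := c / 4) (by positivity) x using 4
      ring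
    rw [Real.norm_of_nonneg (by positivity), ← mul_assoc]
    gcongr
  · refine ae_of_all _ fun x ξ _ => ?_
    have : HasDerivAt (fun ξ : ℂ => -ξ * x) (-(x : ℂ)) ξ := by
      simpa using (hasDerivAt_id ξ).neg.mul_const (x : ℂ)
    exact this.cexp.mul_const (f x)

theorem psiFn_conj (φ : Measure ℝ) (ξ : ℂ) : psiFn φ (conj ξ) = conj (psiFn φ ξ) := by
  rw [psiFn, psiFn, map_mul, map_pow, ← integral_conj]
  congr 1
  refine integral_congr_ae (ae_of_all _ fun x => ?_)
  simp only [map_mul, ← Complex.exp_conj, map_neg, Complex.conj_ofReal]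

namespace H0

variable {φ : Measure ℝ} (hH : H0 φ)
include hH

theorem restrict_Ioi_zero : φ.restrict (Ioi 0) = φ :=
  Measure.restrict_eq_self_of_ae_mem <| by
    simpa using measure_eq_zero_iff_ae_notMem.1 hH.1

theorem lintegral_min_lt_top : ∫⁻ z, ENNReal.ofReal (min (z ^ 2) z) ∂φ < ∞ := by
  simpa only [hH.restrict_Ioi_zero] using hH.2.1

theorem measure_Ioi_lt_top {y : ℝ} (hy : 0 < y) : φ (Ioi y) < ∞ := by
  set a := ENNReal.ofReal (min (y ^ 2) y)
  have ha : a ≠ 0 := (ENNReal.ofReal_pos.2 (lt_min (pow_pos hy 2) hy)).ne'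
  have hle : a * φ (Ioi y) ≤ ∫⁻ z, ENNReal.ofReal (min (z ^ 2) z) ∂φ := by
    refine le_trans ?_ (mul_meas_ge_le_lintegral₀ (by fun_prop) a)
    gcongr
    intro z (hz : y < z)
    exact ENNReal.ofReal_le_ofReal (min_le_min (by nlinarith) hz.le)
  exact ENNReal.lt_top_of_mul_ne_top_right (ne_top_of_le_ne_top hH.lintegral_min_lt_top.ne hle) ha

theorem sigmaFinite : SigmaFinite φ := by
  refine ⟨⟨⟨fun n : ℕ => Iic 0 ∪ Ioi (1 / ((n : ℝ) + 1)), fun _ => trivial, fun n => ?_, ?_⟩⟩⟩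
  · exact (measure_union_le _ _).trans_lt <| by
      rw [hH.1, zero_add]; exact hH.measure_Ioi_lt_top Nat.one_div_pos_of_nat
  · rw [← union_iUnion, iUnion_Ioi_one_div_add_one, Iic_union_Ioi]

theorem lintegral_sub_lt_top {x : ℝ} (hx : 0 < x) : ∫⁻ z, ENNReal.ofReal (z - x) ∂φ < ∞ := by
  have hbound : ∀ z, ENNReal.ofReal (z - x) ≤
      ENNReal.ofReal (min x 1)⁻¹ * ENNReal.ofReal (min (z ^ 2) z) := fun z => by
    rcases le_or_gt z x with hzx | hzx
    · rw [ENNReal.ofReal_of_nonpos (by linarith)]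
      exact zero_le
    rw [← ENNReal.ofReal_mul (by positivity)]
    refine ENNReal.ofReal_le_ofReal ?_
    have hm := lt_min hx one_pos
    rw [inv_mul_eq_div, le_div_iff₀ hm]
    exact le_min (by nlinarith [min_le_left x 1]) (by nlinarith [min_le_right x 1])
  calc _ ≤ ∫⁻ z, ENNReal.ofReal (min x 1)⁻¹ * ENNReal.ofReal (min (z ^ 2) z) ∂φ :=
        lintegral_mono hbound
    _ < ∞ := by
        rw [lintegral_const_mul' _ _ ENNReal.ofReal_ne_top]
        exact ENNReal.mul_lt_top ENNReal.ofReal_lt_top hH.lintegral_min_lt_top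

theorem PhiFn_eq_toReal {x : ℝ} (hx : 0 < x) :
    PhiFn φ x = (∫⁻ z, ENNReal.ofReal (z - x) ∂φ).toReal := by
  have := hH.sigmaFinite
  have hmeas : Measurable fun y => (φ (Ioi y)).toReal :=
    (Antitone.measurable fun _ _ hab => measure_mono (Ioi_subset_Ioi hab)).ennreal_toReal
  rw [PhiFn, if_pos hx]
  unfold levyTail
  rw [integral_eq_lintegral_of_nonneg_ae
    (ae_of_all _ fun _ => ENNReal.toReal_nonneg) hmeas.aestronglyMeasurable,
    ← setLIntegral_measure_Ioi]
  congr 1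
  exact setLIntegral_congr_fun measurableSet_Ioi fun y hy =>
    ENNReal.ofReal_toReal (hH.measure_Ioi_lt_top (hx.trans hy)).ne

theorem ofReal_PhiFn {x : ℝ} (hx : 0 < x) :
    ENNReal.ofReal (PhiFn φ x) = ∫⁻ z, ENNReal.ofReal (z - x) ∂φ := by
  rw [hH.PhiFn_eq_toReal hx, ENNReal.ofReal_toReal (hH.lintegral_sub_lt_top hx).ne]

theorem measurable_PhiFn : Measurable (PhiFn φ) := by
  have hPhi : PhiFn φ = fun x => if 0 < x then (∫⁻ z, ENNReal.ofReal (z - x) ∂φ).toReal else 0 :=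
    funext fun x => by
      split_ifs with hx
      · exact hH.PhiFn_eq_toReal hx
      · simp [PhiFn, hx]
  rw [hPhi]
  refine Measurable.ite (measurableSet_lt measurable_const measurable_id) ?_ measurable_const
  exact (Antitone.measurable fun a b hab =>
    lintegral_mono fun z => ENNReal.ofReal_le_ofReal (by linarith)).ennreal_toReal

theorem integrableOn_exp_mul_PhiFn {c : ℝ} (hc : 0 < c) :
    IntegrableOn (fun x => Real.exp (-(c * x)) * PhiFn φ x) (Ioi 0) := by
  have := hH.sigmaFinite
  obtain ⟨K, hK, hbound⟩ := exists_setLIntegral_exp_mul_sub_le hc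
  refine ⟨(by have := hH.measurable_PhiFn; fun_prop : Measurable _).aestronglyMeasurable, ?_⟩
  rw [hasFiniteIntegral_iff_ofReal
    (ae_of_all _ fun x => mul_nonneg (Real.exp_pos _).le (PhiFn_nonneg φ x))]
  calc ∫⁻ x in Ioi 0, ENNReal.ofReal (Real.exp (-(c * x)) * PhiFn φ x)
      = ∫⁻ x in Ioi 0, (∫⁻ z, ENNReal.ofReal (Real.exp (-(c * x))) * ENNReal.ofReal (z - x) ∂φ) :=
        setLIntegral_congr_fun measurableSet_Ioi fun x hx => by
          rw [ENNReal.ofReal_mul (Real.exp_pos _).le, hH.ofReal_PhiFn hx,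
            lintegral_const_mul' _ _ ENNReal.ofReal_ne_top]
    _ = ∫⁻ z, (∫⁻ x in Ioi 0, ENNReal.ofReal (Real.exp (-(c * x))) * ENNReal.ofReal (z - x)) ∂φ :=
        lintegral_lintegral_swap (by fun_prop)
    _ ≤ ∫⁻ z, K * ENNReal.ofReal (min (z ^ 2) z) ∂φ := lintegral_mono hbound
    _ < ∞ := by
        rw [lintegral_const_mul' _ _ hK.ne]
        exact ENNReal.mul_lt_top hK hH.lintegral_min_lt_top

theorem exists_measure_Ioi_ne_zero : ∃ y, 0 < y ∧ φ (Ioi y) ≠ 0 := by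
  by_contra! h0
  have hIoi : φ (Ioi 0) = 0 := by
    rw [← iUnion_Ioi_one_div_add_one]
    exact measure_iUnion_null fun n => h0 _ Nat.one_div_pos_of_nat
  have h := hH.2.2
  rw [Measure.restrict_eq_zero.2 (measure_mono_null Ioo_subset_Ioi_self hIoi),
    lintegral_zero_measure] at h
  exact ENNReal.zero_ne_top h

theorem exists_PhiFn_pos : ∃ y, 0 < y ∧ ∀ x ∈ Ioo 0 y, 0 < PhiFn φ x := by
  obtain ⟨y, hy, hne⟩ := hH.exists_measure_Ioi_ne_zero
  refine ⟨y, hy, fun x hx => ?_⟩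
  rw [← ENNReal.ofReal_pos, hH.ofReal_PhiFn hx.1]
  calc 0 < ENNReal.ofReal (y - x) * φ (Ioi y) :=
        ENNReal.mul_pos (ENNReal.ofReal_pos.2 (sub_pos.2 hx.2)).ne' hne
    _ = ∫⁻ _ in Ioi y, ENNReal.ofReal (y - x) ∂φ := (setLIntegral_const _ _).symm
    _ ≤ ∫⁻ z in Ioi y, ENNReal.ofReal (z - x) ∂φ := setLIntegral_mono (by fun_prop)
        fun z hz => ENNReal.ofReal_le_ofReal (by linarith [mem_Ioi.1 hz])
    _ ≤ _ := setLIntegral_le_lintegral _ _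

theorem differentiableOn_psiFn : DifferentiableOn ℂ (psiFn φ) {ξ | 0 < ξ.re} := by
  refine (differentiable_pow 2).differentiableOn.mul
    (differentiableOn_integral_cexp_neg_mul (f := fun x => (PhiFn φ x : ℂ))
      (Complex.measurable_ofReal.comp hH.measurable_PhiFn).aestronglyMeasurable fun c hc => ?_)
  simpa [Real.norm_of_nonneg (PhiFn_nonneg φ _)] using hH.integrableOn_exp_mul_PhiFn hc

theorem psiFn_ofReal_ne_zero {t : ℝ} (ht : 0 < t) : psiFn φ t ≠ 0 := by
  obtain ⟨y, hy, hpos⟩ := hH.exists_PhiFn_pos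
  have hint : 0 < ∫ x in Ioi 0, Real.exp (-(t * x)) * PhiFn φ x := by
    refine (setIntegral_pos_iff_support_of_nonneg_ae
      (ae_of_all _ fun x => mul_nonneg (Real.exp_pos _).le (PhiFn_nonneg φ x))
      (hH.integrableOn_exp_mul_PhiFn ht)).2
      (lt_of_lt_of_le (by simp [hy] : (0 : ℝ≥0∞) < volume (Ioo 0 y)) (measure_mono ?_))
    exact fun x hx => ⟨(mul_pos (Real.exp_pos _) (hpos x hx)).ne', hx.1⟩
  have hreal : psiFn φ t = ((t ^ 2 * ∫ x in Ioi 0, Real.exp (-(t * x)) * PhiFn φ x : ℝ) : ℂ) := by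
    rw [psiFn, Complex.ofReal_mul, ← integral_complex_ofReal]
    push_cast
    simp only [neg_mul]
  rw [hreal, Complex.ofReal_ne_zero]
  positivity

theorem eventually_psiFn_near_inv {h : ℝ} (hh : 0 < h) :
    ∀ᶠ ξ in 𝓝 ((1 : ℂ) / h), DifferentiableAt ℂ (psiFn φ) ξ ∧ psiFn φ ξ ≠ 0 ∧ ξ ≠ 0 := by
  have hξ : (1 : ℂ) / h = ((1 / h : ℝ) : ℂ) := by push_cast; rfl
  have hre : 0 < ((1 : ℂ) / h).re := by rw [hξ, Complex.ofReal_re]; positivity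
  have hopen : IsOpen {ξ : ℂ | 0 < ξ.re} := isOpen_lt continuous_const Complex.continuous_re
  have hdiff : ∀ᶠ ξ in 𝓝 ((1 : ℂ) / h), DifferentiableAt ℂ (psiFn φ) ξ :=
    (hopen.eventually_mem hre).mono fun ξ hξ =>
      hH.differentiableOn_psiFn.differentiableAt (hopen.mem_nhds hξ)
  have hne : psiFn φ ((1 : ℂ) / h) ≠ 0 := by
    rw [hξ]; exact hH.psiFn_ofReal_ne_zero (by positivity)
  exact hdiff.and ((hdiff.self_of_nhds.continuousAt.eventually_ne hne).and
    (eventually_ne_nhds (by rw [hξ]; exact_mod_cast (one_div_pos.2 hh).ne')))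

theorem sum_grunK_mul {h : ℝ} (hh : 0 < h) (i : ℤ) {G H : ℂ → ℂ}
    (hGc : ∀ z, G (conj z) = conj (G z)) (hG : ∀ᶠ ξ in 𝓝 ((1 : ℂ) / h), DifferentiableAt ℂ G ξ)
    (hGH : ∀ ξ, ξ ≠ 0 → psiFn φ ξ ≠ 0 → ξ ^ (-i) / psiFn φ ξ * G ξ = H ξ) (m : ℕ) :
    ∑ j ∈ Finset.range (m + 1), grunK φ i (m - j) h * (grunCoeff G j h).re =
      (grunCoeff H m h).re := by
  have hev := hH.eventually_psiFn_near_inv hh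
  have hF : AnalyticAt ℂ (fun ξ => ξ ^ (-i) / psiFn φ ξ) ((1 : ℂ) / h) :=
    analyticAt_iff_eventually_differentiableAt.2 <| hev.mono fun ξ ⟨hd, hψ, hξ⟩ =>
      (differentiableAt_zpow.2 (Or.inl hξ)).div hd hψ
  have hFc : ∀ z, conj z ^ (-i) / psiFn φ (conj z) = conj (z ^ (-i) / psiFn φ z) := fun z => by
    rw [psiFn_conj, map_div₀, map_zpow₀]
  calc _ = (grunCoeff (fun ξ => ξ ^ (-i) / psiFn φ ξ * G ξ) m h).re :=
        sum_re_grunCoeff_mul hFc hGc hF.contDiffAt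
          (analyticAt_iff_eventually_differentiableAt.2 hG).contDiffAt
    _ = (grunCoeff H m h).re := by
        rw [grunCoeff_congr (hev.mono fun ξ ⟨_, hψ, hξ⟩ => hGH ξ hξ hψ)]

theorem sum_grunK_mul_grunPsi {h : ℝ} (hh : 0 < h) (i : ℤ) (m : ℕ) :
    ∑ j ∈ Finset.range (m + 1), grunK φ i (m - j) h * grunPsi φ j h =
      (grunCoeff (fun ξ => ξ ^ (-i)) m h).re :=
  hH.sum_grunK_mul hh i (psiFn_conj φ) ((hH.eventually_psiFn_near_inv hh).mono fun _ h => h.1)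
    (fun _ _ hψ => div_mul_cancel₀ _ hψ) m

theorem sum_grunK_mul_grunPsiM1 {h : ℝ} (hh : 0 < h) (i : ℤ) (m : ℕ) :
    ∑ j ∈ Finset.range (m + 1), grunK φ i (m - j) h * grunPsiM1 φ j h =
      (grunCoeff (fun ξ => ξ ^ (-i - 1)) m h).re :=
  hH.sum_grunK_mul hh i (G := fun ξ => psiFn φ ξ / ξ) (fun z => by rw [psiFn_conj, map_div₀])
    ((hH.eventually_psiFn_near_inv hh).mono fun _ ⟨hd, _, hξ⟩ => hd.div differentiableAt_id hξ)
    (fun ξ hξ hψ => by rw [zpow_sub_one₀ hξ]; field_simp) m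

end H0

/-- discrete convolution identities among the Grünwald-type coefficients. -/
theorem grunwald_discrete_convolution (φ : Measure ℝ) (hH0 : H0 φ) (h : ℝ) (hh : 0 < h)
    (m : ℕ) :
    (∑ j ∈ Finset.range (m + 1), grunK φ (-1) (m - j) h * grunPsi φ j h) =
      (if m = 0 then 1 / h else if m = 1 then -(1 / h) else 0) ∧
    (∑ j ∈ Finset.range (m + 1), grunK φ 0 (m - j) h * grunPsi φ j h) =
      (∑ j ∈ Finset.range (m + 1), grunK φ (-1) (m - j) h * grunPsiM1 φ j h) ∧
    (∑ j ∈ Finset.range (m + 1), grunK φ 0 (m - j) h * grunPsi φ j h) =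
      (if m = 0 then 1 else 0) ∧
    (∑ j ∈ Finset.range (m + 1), grunK φ 1 (m - j) h * grunPsi φ j h) = h ∧
    (∑ j ∈ Finset.range (m + 1), grunK φ 0 (m - j) h * grunPsiM1 φ j h) = h ∧
    (∑ j ∈ Finset.range (m + 1), grunK φ 1 (m - j) h * grunPsiM1 φ j h) =
      (m + 1) * h ^ 2 := by
  simp only [hH0.sum_grunK_mul_grunPsi hh, hH0.sum_grunK_mul_grunPsiM1 hh]
  have hid := re_grunCoeff_zpow_natCast hh.ne' 1 m
  have hconst := re_grunCoeff_zpow_natCast hh.ne' 0 m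
  have hinv := re_grunCoeff_zpow_neg_natCast_succ hh.ne' 0 m
  have hinv_sq := re_grunCoeff_zpow_neg_natCast_succ hh.ne' 1 m
  norm_num at hid hconst hinv hinv_sq ⊢
  rw [hid, hconst]
  refine ⟨?_, ?_, hinv, hinv_sq⟩ <;> rcases m with _ | _ | m <;>
    simp [neg_div, Nat.choose_eq_zero_of_lt]
end
end

section
/- Smoothing property of the Lévy integral operator: under (H0), the operator f ↦ I^ψ_+ f, where I^ψ_+ f(x) = ∫_{−1}^x k₀⁺(x − y − 1) f(y) dy for x ∈ [−1,1], is a bounded linear operator from L¹[−1,1] to the Sobolev space W^{1,1}(−1,1), and its weak derivative is (I^ψ_+ f)'(x) = ∫_{−1}^x k₋₁⁺(x − y − 1) f(y) dy for a.e. x ∈ [−1,1]. Likewise, f ↦ I^ψ_+ f is a bounded linear operator from C[−1,1] to C¹[−1,1], and the same derivative formula holds for every x ∈ [−1,1]. -/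
open MeasureTheory Set Filter Topology

noncomputable section

/-- The defining properties of the scale kernel `k₋₁⁺` (extension by zero to `(-∞,-1)`
of the scale function `k₋₁` of Lemma 3.1): nonnegative on `[-1,∞)`, continuous on
`(-1,∞)`, locally integrable, of sub-exponential growth, with Laplace transform
`∫_0^∞ e^{-ξ y} k₋₁(y-1) dy = ξ/ψ(ξ)` on `{Re ξ > 0}`. -/
def IsScaleKernel (φ : Measure ℝ) (k : ℝ → ℝ) : Prop :=
  (∀ x : ℝ, x < -1 → k x = 0) ∧
  (∀ x : ℝ, -1 ≤ x → 0 ≤ k x) ∧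
  ContinuousOn k (Ioi (-1)) ∧
  LocallyIntegrableOn k (Ici (-1)) ∧
  (∀ ε : ℝ, 0 < ε → Tendsto (fun x : ℝ => Real.exp (-ε * x) * k x) atTop (nhds 0)) ∧
  ∀ ξ : ℂ, 0 < ξ.re →
    IntegrableOn (fun y : ℝ => Complex.exp (-ξ * (y : ℂ)) * (k (y - 1) : ℂ)) (Ioi 0) ∧
    (∫ y in Ioi (0 : ℝ), Complex.exp (-ξ * (y : ℂ)) * (k (y - 1) : ℂ)) = ξ / psiFn φ ξ

/-- Iterated antiderivatives: `kIter k 0 = k₋₁⁺` and `kIter k (n+1) = I₊ (kIter k n)`,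
so that `kₙ⁺ = kIter k (n+1)` for `n ≥ -1`. -/
def kIter (k : ℝ → ℝ) : ℕ → ℝ → ℝ
  | 0 => k
  | m + 1 => fun x => ∫ y in Iic x, kIter k m y


/-!
With `κ z = k (z - 1)`, which is locally integrable and vanishes on `(-∞, 0)`, both operators
are Volterra convolutions `x ↦ ∫_a^x κ(x - y) f(y) dy` on `[a, b] = [-1, 1]`, the first one with
the kernel `K z = ∫_0^z κ` in place of `κ`. Since `κ` vanishes on negative arguments, the inner
integrals may be taken over all of `(a, b]`, and Fubini on the square shows that the convolution
with `K` is the primitive of the convolution with `κ`; the same Fubini argument gives the `L¹`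
bound `‖κ ⋆ f‖₁ ≤ ‖κ‖₁ ‖f‖₁`. For continuous `f`, the substitution `s = x - y` turns the
convolution with `κ` into `∫_0^{b-a} κ(s) f̂(x - s) ds`, with `f̂` the extension of `f` by zero;
dominated convergence makes it continuous, and the fundamental theorem of calculus gives the `C¹`
statement.
-/
section CausalKernel

variable {E : Type*} [NormedAddCommGroup E] {κ : ℝ → E} {c : ℝ}

theorem MeasureTheory.LocallyIntegrable.comp_sub_right (hκ : LocallyIntegrable κ) (d : ℝ) :
    LocallyIntegrable (fun x => κ (x - d)) := by
  refine locallyIntegrable_iff.2 fun K hK => ?_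
  have hpre := ((measurePreserving_sub_right volume d).integrableOn_comp_preimage
    (measurableEmbedding_subRight d)).2
      (hκ.integrableOn_isCompact (hK.image (continuous_sub_right d)))
  exact hpre.mono_set (subset_preimage_image _ _)

theorem locallyIntegrable_of_locallyIntegrableOn_Ici (hκ : LocallyIntegrableOn κ (Ici c))
    (hκ0 : ∀ z < c, κ z = 0) : LocallyIntegrable κ := by
  refine locallyIntegrable_iff.2 fun K hK => ?_
  have hIio : IntegrableOn κ (Iio c) :=
    integrableOn_zero.congr_fun (fun z hz => (hκ0 z hz).symm) measurableSet_Iio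
  have hIci : IntegrableOn κ (K ∩ Ici c) :=
    hκ.integrableOn_compact_subset inter_subset_right (hK.inter_right isClosed_Ici)
  refine (hIci.union hIio).mono_set fun z hz => ?_
  rcases lt_or_ge z c with h | h
  · exact Or.inr h
  · exact Or.inl ⟨hz, h⟩

theorem integrableOn_Iic_of_eq_zero_of_lt (hκ : LocallyIntegrable κ) (hκ0 : ∀ z < c, κ z = 0)
    (L : ℝ) : IntegrableOn κ (Iic L) := by
  have hIio : IntegrableOn κ (Iio c) :=
    integrableOn_zero.congr_fun (fun z hz => (hκ0 z hz).symm) measurableSet_Iio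
  refine (hIio.union (hκ.integrableOn_isCompact (isCompact_Icc (a := c) (b := L)))).mono_set
    fun z hz => ?_
  rcases lt_or_ge z c with h | h
  · exact Or.inl h
  · exact Or.inr ⟨h, hz⟩

theorem setIntegral_Iic_eq_intervalIntegral [NormedSpace ℝ E] (hκ : LocallyIntegrable κ)
    (hκ0 : ∀ z < c, κ z = 0) (L : ℝ) : ∫ z in Iic L, κ z = ∫ z in c..L, κ z := by
  have hc : ∫ z in Iic c, κ z = 0 := by
    rw [setIntegral_congr_set Iio_ae_eq_Iic.symm]
    exact setIntegral_eq_zero_of_forall_eq_zero hκ0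
  rw [← intervalIntegral.integral_Iic_sub_Iic (integrableOn_Iic_of_eq_zero_of_lt hκ hκ0 c)
    (integrableOn_Iic_of_eq_zero_of_lt hκ hκ0 L), hc, sub_zero]

theorem intervalIntegral_eq_zero_of_eq_zero_of_neg [NormedSpace ℝ E] (hκ0 : ∀ z < 0, κ z = 0)
    {z : ℝ} (hz : z < 0) : ∫ s in (0 : ℝ)..z, κ s = 0 := by
  refine intervalIntegral.integral_zero_ae ?_
  filter_upwards [Measure.ae_ne volume 0] with s hs hsz
  rw [uIoc_of_ge hz.le] at hsz
  exact hκ0 s (lt_of_le_of_ne hsz.2 hs)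

end CausalKernel

def volterraConv (κ f : ℝ → ℝ) (a x : ℝ) : ℝ := ∫ y in a..x, κ (x - y) * f y

section VolterraConv

variable {κ f : ℝ → ℝ} {a b : ℝ}

theorem volterraConv_eq_setIntegral_Ioc (hκ0 : ∀ z < 0, κ z = 0) {t : ℝ} (ht : t ∈ Icc a b) :
    volterraConv κ f a t = ∫ y in Ioc a b, κ (t - y) * f y := by
  rw [volterraConv, intervalIntegral.integral_of_le ht.1]
  refine (setIntegral_eq_of_subset_of_forall_sdiff_eq_zero measurableSet_Ioc
    (Ioc_subset_Ioc_right ht.2) fun y hy => ?_).symm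
  have hty : t < y := lt_of_not_ge fun h => hy.2 ⟨hy.1.1, h⟩
  rw [hκ0 _ (sub_neg.2 hty), zero_mul]

theorem integrable_volterraConv_integrand (hκ : LocallyIntegrable κ)
    (hf : IntegrableOn f (Ioc a b)) :
    Integrable (fun p : ℝ × ℝ => κ (p.1 - p.2) * f p.2)
      ((volume.restrict (Ioc a b)).prod (volume.restrict (Ioc a b))) := by
  have hκ' : Integrable ((Icc (a - b) (b - a)).indicator κ) :=
    (hκ.integrableOn_isCompact isCompact_Icc).integrable_indicator measurableSet_Icc
  -- Mathlib's convolution integrand, for `f` and `κ` cut off outside bounded intervals.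
  have hprod := ((hf.integrable_indicator measurableSet_Ioc).convolution_integrand
    (ContinuousLinearMap.mul ℝ ℝ).flip hκ').restrict (s := Ioc a b ×ˢ Ioc a b)
  rw [← Measure.prod_restrict] at hprod
  refine hprod.congr ?_
  rw [Measure.prod_restrict]
  filter_upwards [ae_restrict_mem (measurableSet_Ioc.prod measurableSet_Ioc)] with p hp
  obtain ⟨⟨h1, h2⟩, h3, h4⟩ := hp
  simp only [ContinuousLinearMap.flip_apply, ContinuousLinearMap.mul_apply',
    indicator_of_mem (show p.2 ∈ Ioc a b from ⟨h3, h4⟩),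
    indicator_of_mem (show p.1 - p.2 ∈ Icc (a - b) (b - a) by constructor <;> linarith)]

theorem integrableOn_volterraConv (hκ : LocallyIntegrable κ) (hκ0 : ∀ z < 0, κ z = 0)
    (hf : IntegrableOn f (Ioc a b)) : IntegrableOn (volterraConv κ f a) (Ioc a b) :=
  IntegrableOn.congr_fun (integrable_volterraConv_integrand hκ hf).integral_prod_left
    (fun _ ht => (volterraConv_eq_setIntegral_Ioc hκ0 (Ioc_subset_Icc_self ht)).symm)
    measurableSet_Ioc

theorem setIntegral_abs_comp_sub_le (hκ : LocallyIntegrable κ) (hκ0 : ∀ z < 0, κ z = 0)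
    {y : ℝ} (hy : a ≤ y) (hab : a ≤ b) :
    ∫ t in Ioc a b, |κ (t - y)| ≤ ∫ s in Iic (b - a), |κ s| := by
  rw [← intervalIntegral.integral_of_le hab, intervalIntegral.integral_comp_sub_right
    (fun s => |κ s|), intervalIntegral.integral_of_le (by linarith)]
  exact setIntegral_mono_set (integrableOn_Iic_of_eq_zero_of_lt hκ hκ0 _).abs
    (Eventually.of_forall fun _ => abs_nonneg _)
    (Eventually.of_forall fun s hs => (hs.2.trans (by linarith) : s ≤ b - a))

theorem integral_abs_volterraConv_le (hκ : LocallyIntegrable κ) (hκ0 : ∀ z < 0, κ z = 0)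
    (hf : IntegrableOn f (Ioc a b)) :
    ∫ t in Ioc a b, |volterraConv κ f a t| ≤
      (∫ s in Iic (b - a), |κ s|) * ∫ y in Ioc a b, |f y| := by
  have hP := integrable_volterraConv_integrand hκ hf
  calc ∫ t in Ioc a b, |volterraConv κ f a t|
      ≤ ∫ t in Ioc a b, ∫ y in Ioc a b, |κ (t - y) * f y| := by
        refine integral_mono_of_nonneg (Eventually.of_forall fun _ => abs_nonneg _)
          hP.norm.integral_prod_left ?_
        filter_upwards [ae_restrict_mem measurableSet_Ioc] with t ht
        rw [volterraConv_eq_setIntegral_Ioc hκ0 (Ioc_subset_Icc_self ht)]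
        exact abs_integral_le_integral_abs
    _ = ∫ y in Ioc a b, (∫ t in Ioc a b, |κ (t - y)|) * |f y| := by
        rw [integral_integral_swap (f := fun t y => |κ (t - y) * f y|) hP.norm]
        simp only [abs_mul, integral_mul_const]
    _ ≤ ∫ y in Ioc a b, (∫ s in Iic (b - a), |κ s|) * |f y| := by
        refine integral_mono_of_nonneg (Eventually.of_forall fun _ => by positivity)
          (hf.abs.const_mul _) ?_
        filter_upwards [ae_restrict_mem measurableSet_Ioc] with y hy
        exact mul_le_mul_of_nonneg_right
          (setIntegral_abs_comp_sub_le hκ hκ0 hy.1.le (hy.1.le.trans hy.2)) (abs_nonneg _)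
    _ = (∫ s in Iic (b - a), |κ s|) * ∫ y in Ioc a b, |f y| := integral_const_mul _ _

theorem setIntegral_comp_sub_eq_intervalIntegral (hκ : LocallyIntegrable κ)
    (hκ0 : ∀ z < 0, κ z = 0) {x y : ℝ} (hy : a < y) (hx : a ≤ x) :
    ∫ t in Ioc a x, κ (t - y) = ∫ s in (0 : ℝ)..(x - y), κ s := by
  have hii : ∀ c d : ℝ, IntervalIntegrable κ volume c d := fun c d =>
    (hκ.integrableOn_isCompact isCompact_uIcc).intervalIntegrable
  rw [← intervalIntegral.integral_of_le hx, intervalIntegral.integral_comp_sub_right,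
    ← intervalIntegral.integral_interval_sub_left (hii 0 _) (hii 0 _),
    intervalIntegral_eq_zero_of_eq_zero_of_neg hκ0 (sub_neg.2 hy), sub_zero]

theorem integral_volterraConv (hκ : LocallyIntegrable κ) (hκ0 : ∀ z < 0, κ z = 0)
    (hf : IntegrableOn f (Ioc a b)) {x : ℝ} (hx : x ∈ Icc a b) :
    ∫ t in a..x, volterraConv κ f a t = volterraConv (fun z => ∫ s in (0 : ℝ)..z, κ s) f a x := by
  have hP : Integrable (fun p : ℝ × ℝ => κ (p.1 - p.2) * f p.2)
      ((volume.restrict (Ioc a x)).prod (volume.restrict (Ioc a b))) := by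
    refine (integrable_volterraConv_integrand hκ hf).mono_measure ?_
    rw [Measure.prod_restrict, Measure.prod_restrict]
    exact Measure.restrict_mono (prod_mono (Ioc_subset_Ioc_right hx.2) subset_rfl) le_rfl
  rw [intervalIntegral.integral_of_le hx.1, volterraConv_eq_setIntegral_Ioc
    (fun z hz => intervalIntegral_eq_zero_of_eq_zero_of_neg hκ0 hz) hx]
  calc ∫ t in Ioc a x, volterraConv κ f a t
      = ∫ t in Ioc a x, ∫ y in Ioc a b, κ (t - y) * f y :=
        setIntegral_congr_fun measurableSet_Ioc fun t ht =>
          volterraConv_eq_setIntegral_Ioc hκ0 ⟨ht.1.le, ht.2.trans hx.2⟩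
    _ = ∫ y in Ioc a b, ∫ t in Ioc a x, κ (t - y) * f y :=
        integral_integral_swap (f := fun t y => κ (t - y) * f y) hP
    _ = ∫ y in Ioc a b, (∫ s in (0 : ℝ)..(x - y), κ s) * f y :=
        setIntegral_congr_fun measurableSet_Ioc fun y hy => by
          rw [integral_mul_const, setIntegral_comp_sub_eq_intervalIntegral hκ hκ0 hy.1 hx.1]

theorem volterraConv_eq_intervalIntegral_indicator {t : ℝ} (ht : t ∈ Icc a b) :
    volterraConv κ f a t = ∫ s in (0 : ℝ)..(b - a), κ s * (Icc a b).indicator f (t - s) := by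
  have hind : volterraConv κ f a t =
      ∫ y in a..t, (fun s => κ s * (Icc a b).indicator f (t - s)) (t - y) := by
    refine intervalIntegral.integral_congr fun y hy => ?_
    rw [uIcc_of_le ht.1] at hy
    simp only [sub_sub_cancel, indicator_of_mem (Icc_subset_Icc_right ht.2 hy)]
  rw [hind, intervalIntegral.integral_comp_sub_left
      (fun s => κ s * (Icc a b).indicator f (t - s)) t, sub_self,
    intervalIntegral.integral_of_le (sub_nonneg.2 ht.1),
    intervalIntegral.integral_of_le (sub_nonneg.2 (ht.1.trans ht.2))]
  refine (setIntegral_eq_of_subset_of_forall_sdiff_eq_zero measurableSet_Ioc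
    (Ioc_subset_Ioc_right (by linarith [ht.2])) fun s hs => ?_).symm
  have hts : t - s < a := by
    have : t - a < s := lt_of_not_ge fun h => hs.2 ⟨hs.1.1, h⟩
    linarith
  rw [indicator_of_notMem (fun h => (not_le.2 hts) h.1), mul_zero]

theorem abs_indicator_le {s : Set ℝ} {M : ℝ} (hM0 : 0 ≤ M) (hM : ∀ y ∈ s, |f y| ≤ M)
    (u : ℝ) : |s.indicator f u| ≤ M := by
  by_cases hu : u ∈ s
  · rw [indicator_of_mem hu]; exact hM u hu
  · rw [indicator_of_notMem hu, abs_zero]; exact hM0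

theorem continuousOn_volterraConv (hκ : LocallyIntegrable κ) (hf : ContinuousOn f (Icc a b)) :
    ContinuousOn (volterraConv κ f a) (Icc a b) := by
  rcases lt_or_ge b a with hba | hab
  · simp [Icc_eq_empty_of_lt hba]
  obtain ⟨M, hM⟩ := isCompact_Icc.exists_bound_of_continuousOn hf
  have hM0 : 0 ≤ M := (norm_nonneg _).trans (hM a ⟨le_rfl, hab⟩)
  have hmeas : Measurable ((Icc a b).indicator f) := by
    rw [← piecewise_eq_indicator]
    exact hf.measurable_piecewise continuousOn_const measurableSet_Icc
  -- For fixed `s`, `t ↦ (Icc a b).indicator f (t - s)` jumps only at `t = s + a` and `t = s + b`.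
  have hcont :
      Continuous fun t => ∫ s in (0 : ℝ)..(b - a), κ s * (Icc a b).indicator f (t - s) := by
    refine continuous_iff_continuousAt.2 fun t₀ =>
      intervalIntegral.continuousAt_of_dominated_interval (bound := fun s => |κ s| * M)
        (Eventually.of_forall fun t => ?_) (Eventually.of_forall fun t => ?_) ?_ ?_
    · exact (hκ.aestronglyMeasurable.mul
        (hmeas.comp (measurable_const.sub measurable_id)).aestronglyMeasurable).restrict
    · refine Eventually.of_forall fun s _ => ?_
      rw [norm_mul, Real.norm_eq_abs, Real.norm_eq_abs]
      exact mul_le_mul_of_nonneg_left (abs_indicator_le hM0 hM _) (abs_nonneg _)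
    · exact ((hκ.integrableOn_isCompact isCompact_uIcc).intervalIntegrable).abs.mul_const M
    · filter_upwards [Measure.ae_ne volume (t₀ - a), Measure.ae_ne volume (t₀ - b)]
        with s hsa hsb _
      have hfr : t₀ - s ∉ frontier (Icc a b) := by
        rw [frontier_Icc hab, mem_insert_iff, mem_singleton_iff]
        rintro (h | h)
        · exact hsa (by linarith)
        · exact hsb (by linarith)
      exact continuousAt_const.mul (ContinuousAt.comp (f := fun t => t - s) (x := t₀)
        ((hf.mono interior_subset).continuousAt_indicator hfr)
        (continuousAt_id.sub continuousAt_const))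
  exact hcont.continuousOn.congr fun t ht => volterraConv_eq_intervalIntegral_indicator ht

theorem abs_volterraConv_le (hκ : LocallyIntegrable κ) (hκ0 : ∀ z < 0, κ z = 0) {M : ℝ}
    (hM : ∀ y ∈ Icc a b, |f y| ≤ M) {t : ℝ} (ht : t ∈ Icc a b) :
    |volterraConv κ f a t| ≤ (∫ s in Iic (b - a), |κ s|) * M := by
  have hM0 : 0 ≤ M := (abs_nonneg _).trans (hM t ht)
  have hab : 0 ≤ b - a := sub_nonneg.2 (ht.1.trans ht.2)
  rw [volterraConv_eq_intervalIntegral_indicator ht, ← Real.norm_eq_abs]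
  calc ‖∫ s in (0 : ℝ)..(b - a), κ s * (Icc a b).indicator f (t - s)‖
      ≤ ∫ s in (0 : ℝ)..(b - a), |κ s| * M := by
        refine intervalIntegral.norm_integral_le_of_norm_le hab
          (Eventually.of_forall fun s _ => ?_)
          ((hκ.integrableOn_isCompact isCompact_uIcc).intervalIntegrable.abs.mul_const M)
        rw [norm_mul, Real.norm_eq_abs, Real.norm_eq_abs]
        exact mul_le_mul_of_nonneg_left (abs_indicator_le hM0 hM _) (abs_nonneg _)
    _ ≤ (∫ s in Iic (b - a), |κ s|) * M := by
        rw [intervalIntegral.integral_mul_const, intervalIntegral.integral_of_le hab]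
        exact mul_le_mul_of_nonneg_right (setIntegral_mono_set
          (integrableOn_Iic_of_eq_zero_of_lt hκ hκ0 _).abs
          (Eventually.of_forall fun _ => abs_nonneg _)
          (Eventually.of_forall fun s hs => (hs.2 : s ≤ b - a))) hM0

theorem hasDerivWithinAt_intervalIntegral_of_continuousOn {g : ℝ → ℝ}
    (hg : ContinuousOn g (Icc a b)) {x : ℝ} (hx : x ∈ Icc a b) :
    HasDerivWithinAt (fun u => ∫ t in a..u, g t) (g x) (Icc a b) x := by
  have : Fact (x ∈ Icc a b) := ⟨hx⟩
  exact intervalIntegral.integral_hasDerivWithinAt_right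
    ((hg.mono (uIcc_subset_Icc (left_mem_Icc.2 (hx.1.trans hx.2)) hx)).intervalIntegrable)
    (hg.stronglyMeasurableAtFilter_nhdsWithin measurableSet_Icc x) (hg x hx)

end VolterraConv

section Smoothing

variable {κ : ℝ → ℝ} {a b : ℝ}

theorem exists_volterraConv_smoothing_integrable (hκ : LocallyIntegrable κ)
    (hκ0 : ∀ z < 0, κ z = 0) (hab : a ≤ b) :
    ∃ C : ℝ, 0 < C ∧ ∀ f : ℝ → ℝ, IntegrableOn f (Icc a b) →
      IntegrableOn (volterraConv (fun z => ∫ s in (0 : ℝ)..z, κ s) f a) (Icc a b) ∧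
      IntegrableOn (volterraConv κ f a) (Icc a b) ∧
      (∀ x ∈ Icc a b, volterraConv (fun z => ∫ s in (0 : ℝ)..z, κ s) f a x =
        ∫ t in a..x, volterraConv κ f a t) ∧
      (∫ x in Icc a b, |volterraConv (fun z => ∫ s in (0 : ℝ)..z, κ s) f a x|) +
          (∫ x in Icc a b, |volterraConv κ f a x|) ≤ C * ∫ x in Icc a b, |f x| := by
  set B := ∫ s in Iic (b - a), |κ s|
  have hB : 0 ≤ B := setIntegral_nonneg measurableSet_Iic fun _ _ => abs_nonneg _
  refine ⟨(b - a + 1) * B + 1, by nlinarith, fun f hf => ?_⟩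
  set F := volterraConv (fun z => ∫ s in (0 : ℝ)..z, κ s) f a
  set G := volterraConv κ f a
  have hf' : IntegrableOn f (Ioc a b) := hf.mono_set Ioc_subset_Icc_self
  have hG : IntegrableOn G (Ioc a b) := integrableOn_volterraConv hκ hκ0 hf'
  have hG' : IntegrableOn G (Icc a b) :=
    (integrableOn_Icc_iff_integrableOn_Ioc (ha := enorm_ne_top)).2 hG
  have hFG : ∀ x ∈ Icc a b, F x = ∫ t in a..x, G t := fun x hx =>
    (integral_volterraConv hκ hκ0 hf' hx).symm
  have hFc : ContinuousOn F (Icc a b) := by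
    refine ContinuousOn.congr ?_ hFG
    rw [← uIcc_of_le hab]
    exact intervalIntegral.continuousOn_primitive_interval (μ := volume)
      (by rwa [uIcc_of_le hab])
  have hFle : ∀ x ∈ Icc a b, |F x| ≤ ∫ t in Ioc a b, |G t| := fun x hx => by
    rw [hFG x hx, intervalIntegral.integral_of_le hx.1]
    exact abs_integral_le_integral_abs.trans (setIntegral_mono_set hG.abs
      (Eventually.of_forall fun _ => abs_nonneg _) (Ioc_subset_Ioc_right hx.2).eventuallyLE)
  have hFint : ∫ x in Icc a b, |F x| ≤ (b - a) * ∫ t in Ioc a b, |G t| := by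
    have := setIntegral_mono_on (μ := volume) hFc.integrableOn_Icc.abs
      (integrableOn_const measure_Icc_lt_top.ne) measurableSet_Icc hFle
    rwa [setIntegral_const, Real.volume_real_Icc_of_le hab, smul_eq_mul] at this
  have hGint := integral_abs_volterraConv_le hκ hκ0 hf'
  have hN : 0 ≤ ∫ y in Ioc a b, |f y| :=
    setIntegral_nonneg measurableSet_Ioc fun _ _ => abs_nonneg _
  refine ⟨hFc.integrableOn_Icc, hG', hFG, ?_⟩
  rw [integral_Icc_eq_integral_Ioc (f := fun x => |G x|),
    integral_Icc_eq_integral_Ioc (f := fun x => |f x|)]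
  nlinarith

theorem exists_volterraConv_smoothing_continuous (hκ : LocallyIntegrable κ)
    (hκ0 : ∀ z < 0, κ z = 0) (hab : a ≤ b) :
    ∃ C : ℝ, 0 < C ∧ ∀ f : ℝ → ℝ, ContinuousOn f (Icc a b) →
      ContinuousOn (volterraConv (fun z => ∫ s in (0 : ℝ)..z, κ s) f a) (Icc a b) ∧
      ContinuousOn (volterraConv κ f a) (Icc a b) ∧
      (∀ x ∈ Icc a b, HasDerivWithinAt (volterraConv (fun z => ∫ s in (0 : ℝ)..z, κ s) f a)
        (volterraConv κ f a x) (Icc a b) x) ∧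
      ∀ x ∈ Icc a b,
        |volterraConv (fun z => ∫ s in (0 : ℝ)..z, κ s) f a x| + |volterraConv κ f a x| ≤
          C * sSup ((fun y : ℝ => |f y|) '' Icc a b) := by
  set B := ∫ s in Iic (b - a), |κ s|
  have hB : 0 ≤ B := setIntegral_nonneg measurableSet_Iic fun _ _ => abs_nonneg _
  refine ⟨(b - a + 1) * B + 1, by nlinarith, fun f hf => ?_⟩
  set F := volterraConv (fun z => ∫ s in (0 : ℝ)..z, κ s) f a
  set G := volterraConv κ f a
  set M := sSup ((fun y : ℝ => |f y|) '' Icc a b)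
  have hM : ∀ y ∈ Icc a b, |f y| ≤ M := fun y hy =>
    le_csSup (isCompact_Icc.image_of_continuousOn hf.abs).bddAbove (mem_image_of_mem _ hy)
  have hM0 : 0 ≤ M := (abs_nonneg _).trans (hM a ⟨le_rfl, hab⟩)
  have hGc : ContinuousOn G (Icc a b) := continuousOn_volterraConv hκ hf
  have hFG : ∀ x ∈ Icc a b, F x = ∫ t in a..x, G t := fun x hx =>
    (integral_volterraConv hκ hκ0 (hf.integrableOn_Icc.mono_set Ioc_subset_Icc_self) hx).symm
  have hderiv : ∀ x ∈ Icc a b, HasDerivWithinAt F (G x) (Icc a b) x := fun x hx =>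
    (hasDerivWithinAt_intervalIntegral_of_continuousOn hGc hx).congr hFG (hFG x hx)
  have hGle : ∀ x ∈ Icc a b, |G x| ≤ B * M := fun x hx => abs_volterraConv_le hκ hκ0 hM hx
  have hFle : ∀ x ∈ Icc a b, |F x| ≤ B * M * (b - a) := fun x hx => by
    rw [hFG x hx, ← Real.norm_eq_abs]
    refine (intervalIntegral.norm_integral_le_of_norm_le_const (C := B * M) fun t ht => ?_).trans ?_
    · rw [uIoc_of_le hx.1] at ht
      exact hGle t ⟨ht.1.le, ht.2.trans hx.2⟩
    · rw [abs_of_nonneg (sub_nonneg.2 hx.1)]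
      exact mul_le_mul_of_nonneg_left (by linarith [hx.2]) (mul_nonneg hB hM0)
  refine ⟨fun x hx => (hderiv x hx).continuousWithinAt, hGc, hderiv, fun x hx => ?_⟩
  nlinarith [hFle x hx, hGle x hx]

end Smoothing

theorem kIter_one_sub_one {k : ℝ → ℝ} (hk : LocallyIntegrable k) (hk0 : ∀ x < -1, k x = 0)
    (z : ℝ) : kIter k 1 (z - 1) = ∫ s in (0 : ℝ)..z, k (s - 1) := by
  rw [intervalIntegral.integral_comp_sub_right, zero_sub]
  exact setIntegral_Iic_eq_intervalIntegral hk hk0 (z - 1)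

theorem levy_integral_smoothing_general (φ : Measure ℝ) (k : ℝ → ℝ)
    (hk : IsScaleKernel φ k) :
    (∃ C : ℝ, 0 < C ∧ ∀ f : ℝ → ℝ, IntegrableOn f (Icc (-1) 1) →
      IntegrableOn (fun x : ℝ => ∫ y in (-1 : ℝ)..x, kIter k 1 (x - y - 1) * f y)
        (Icc (-1) 1) ∧
      IntegrableOn (fun x : ℝ => ∫ y in (-1 : ℝ)..x, k (x - y - 1) * f y) (Icc (-1) 1) ∧
      (∀ x ∈ Icc (-1 : ℝ) 1,
        (∫ y in (-1 : ℝ)..x, kIter k 1 (x - y - 1) * f y) =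
          ∫ t in (-1 : ℝ)..x, ∫ y in (-1 : ℝ)..t, k (t - y - 1) * f y) ∧
      (∫ x in Icc (-1 : ℝ) 1, |∫ y in (-1 : ℝ)..x, kIter k 1 (x - y - 1) * f y|) +
          (∫ x in Icc (-1 : ℝ) 1, |∫ y in (-1 : ℝ)..x, k (x - y - 1) * f y|) ≤
        C * ∫ x in Icc (-1 : ℝ) 1, |f x|) ∧
    (∃ C : ℝ, 0 < C ∧ ∀ f : ℝ → ℝ, ContinuousOn f (Icc (-1) 1) →
      ContinuousOn (fun x : ℝ => ∫ y in (-1 : ℝ)..x, kIter k 1 (x - y - 1) * f y)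
        (Icc (-1) 1) ∧
      ContinuousOn (fun x : ℝ => ∫ y in (-1 : ℝ)..x, k (x - y - 1) * f y) (Icc (-1) 1) ∧
      (∀ x ∈ Icc (-1 : ℝ) 1,
        HasDerivWithinAt (fun z : ℝ => ∫ y in (-1 : ℝ)..z, kIter k 1 (z - y - 1) * f y)
          (∫ y in (-1 : ℝ)..x, k (x - y - 1) * f y) (Icc (-1) 1) x) ∧
      ∀ x ∈ Icc (-1 : ℝ) 1,
        |∫ y in (-1 : ℝ)..x, kIter k 1 (x - y - 1) * f y| +
            |∫ y in (-1 : ℝ)..x, k (x - y - 1) * f y| ≤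
          C * sSup ((fun y : ℝ => |f y|) '' Icc (-1 : ℝ) 1)) := by
  obtain ⟨hk0, -, -, hkli, -, -⟩ := hk
  have hk' : LocallyIntegrable k := locallyIntegrable_of_locallyIntegrableOn_Ici hkli hk0
  have hκ0 : ∀ z < 0, k (z - 1) = 0 := fun z hz => hk0 _ (by linarith)
  simp only [kIter_one_sub_one hk' hk0]
  exact ⟨exists_volterraConv_smoothing_integrable (hk'.comp_sub_right 1) hκ0 (by norm_num),
    exists_volterraConv_smoothing_continuous (hk'.comp_sub_right 1) hκ0 (by norm_num)⟩

/-- smoothing property of the Lévy integral operator `I^ψ_+`: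
it maps `L¹[-1,1]` boundedly into `W^{1,1}(-1,1)` with derivative
`(I^ψ_+ f)'(x) = ∫_{-1}^x k₋₁⁺(x-y-1) f(y) dy`, and `C[-1,1]` boundedly into `C¹[-1,1]`
with the same derivative formula. -/
theorem levy_integral_smoothing (φ : Measure ℝ) (hH0 : H0 φ) (k : ℝ → ℝ)
    (hk : IsScaleKernel φ k) :
    (∃ C : ℝ, 0 < C ∧ ∀ f : ℝ → ℝ, IntegrableOn f (Icc (-1) 1) →
      IntegrableOn (fun x : ℝ => ∫ y in (-1 : ℝ)..x, kIter k 1 (x - y - 1) * f y)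
        (Icc (-1) 1) ∧
      IntegrableOn (fun x : ℝ => ∫ y in (-1 : ℝ)..x, k (x - y - 1) * f y) (Icc (-1) 1) ∧
      (∀ x ∈ Icc (-1 : ℝ) 1,
        (∫ y in (-1 : ℝ)..x, kIter k 1 (x - y - 1) * f y) =
          ∫ t in (-1 : ℝ)..x, ∫ y in (-1 : ℝ)..t, k (t - y - 1) * f y) ∧
      (∫ x in Icc (-1 : ℝ) 1, |∫ y in (-1 : ℝ)..x, kIter k 1 (x - y - 1) * f y|) +
          (∫ x in Icc (-1 : ℝ) 1, |∫ y in (-1 : ℝ)..x, k (x - y - 1) * f y|) ≤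
        C * ∫ x in Icc (-1 : ℝ) 1, |f x|) ∧
    (∃ C : ℝ, 0 < C ∧ ∀ f : ℝ → ℝ, ContinuousOn f (Icc (-1) 1) →
      ContinuousOn (fun x : ℝ => ∫ y in (-1 : ℝ)..x, kIter k 1 (x - y - 1) * f y)
        (Icc (-1) 1) ∧
      ContinuousOn (fun x : ℝ => ∫ y in (-1 : ℝ)..x, k (x - y - 1) * f y) (Icc (-1) 1) ∧
      (∀ x ∈ Icc (-1 : ℝ) 1,
        HasDerivWithinAt (fun z : ℝ => ∫ y in (-1 : ℝ)..z, kIter k 1 (z - y - 1) * f y)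
          (∫ y in (-1 : ℝ)..x, k (x - y - 1) * f y) (Icc (-1) 1) x) ∧
      ∀ x ∈ Icc (-1 : ℝ) 1,
        |∫ y in (-1 : ℝ)..x, kIter k 1 (x - y - 1) * f y| +
            |∫ y in (-1 : ℝ)..x, k (x - y - 1) * f y| ≤
          C * sSup ((fun y : ℝ => |f y|) '' Icc (-1 : ℝ) 1)) :=
  levy_integral_smoothing_general φ k hk
end
end

section
/- Duality of forward and backward Dirichlet–Dirichlet operators: under (H0), let g₊ ∈ L¹[−1,1] and let g₋ ∈ C[−1,1] with g₋(−1) = g₋(1) = 0. Set f = I^ψ_+ g₊ − (I^ψ_+ g₊(1)/k₀⁺(1)) · k₀⁺ and w = I^ψ_− g₋ − (I^ψ_− g₋(−1)/k₀⁻(−1)) · k₀⁻, where I^ψ_− g(x) = ∫_x^1 k₀⁺(y − x − 1) g(y) dy and k₀⁻(x) = k₀⁺(−x). Then ∫_{−1}^1 w(x) g₊(x) dx = ∫_{−1}^1 f(x) g₋(x) dx. (Here g₊ = ∂^ψ_+ f and g₋ = ∂^ψ_− w, so this expresses ∫ w ∂^ψ_+ f = ∫ f ∂^ψ_− w.) 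-/
open MeasureTheory Set Filter Topology

noncomputable section

/-- duality of the forward and backward Dirichlet–Dirichlet operators:
with `f = I^ψ_+ g₊ - (I^ψ_+ g₊(1)/k₀⁺(1)) k₀⁺` and
`w = I^ψ_- g₋ - (I^ψ_- g₋(-1)/k₀⁻(-1)) k₀⁻`, one has `∫ w g₊ = ∫ f g₋`. -/
theorem duality_DD (φ : Measure ℝ) (hH0 : H0 φ) (k : ℝ → ℝ)
    (hk : IsScaleKernel φ k) (hk0 : 0 < kIter k 1 1)
    (gp gm : ℝ → ℝ) (hgp : IntegrableOn gp (Icc (-1) 1))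
    (hgm : ContinuousOn gm (Icc (-1) 1)) (hgm1 : gm (-1) = 0) (hgm2 : gm 1 = 0) :
    (∫ x in (-1 : ℝ)..1,
        ((∫ y in x..(1 : ℝ), kIter k 1 (y - x - 1) * gm y) -
          (∫ y in (-1 : ℝ)..(1 : ℝ), kIter k 1 (y - (-1) - 1) * gm y) / kIter k 1 1 *
            kIter k 1 (-x)) * gp x) =
      ∫ x in (-1 : ℝ)..1,
        ((∫ y in (-1 : ℝ)..x, kIter k 1 (x - y - 1) * gp y) -
          (∫ y in (-1 : ℝ)..(1 : ℝ), kIter k 1 (1 - y - 1) * gp y) / kIter k 1 1 *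
            kIter k 1 x) * gm x := by
  obtain ⟨hz, -, -, hloc, -, -⟩ := hk
  set K : ℝ → ℝ := kIter k 1 with hKdef
  have hKeq : ∀ t : ℝ, K t = ∫ y in Iic t, k y := by intro t; simp only [hKdef, kIter]
  have hae1 : ∀ᵐ x : ℝ, x ≠ (-1 : ℝ) := by
    rw [ae_iff]
    have : {x : ℝ | ¬x ≠ -1} = {(-1 : ℝ)} := by ext x; simp
    rw [this]
    exact measure_singleton _
  -- integrability of k on half-lines
  have hkIic : ∀ t : ℝ, IntegrableOn k (Iic t) := by
    intro t
    have h1 : IntegrableOn k (Iio (-1 : ℝ)) :=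
      (integrableOn_zero).congr_fun (fun x hx => (hz x hx).symm) measurableSet_Iio
    have h2 : IntegrableOn k (Icc (-1 : ℝ) t) :=
      hloc.integrableOn_compact_subset (Icc_subset_Ici_self) isCompact_Icc
    refine (h1.union h2).mono_set fun x hx => ?_
    rcases lt_or_ge x (-1 : ℝ) with h | h
    · exact Or.inl h
    · exact Or.inr ⟨h, hx⟩
  -- K vanishes below -1
  have hK0 : ∀ t : ℝ, t ≤ -1 → K t = 0 := by
    intro t ht
    rw [hKeq]
    apply integral_eq_zero_of_ae
    rw [EventuallyEq, ae_restrict_iff' measurableSet_Iic]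
    filter_upwards [hae1] with x hx hxt
    exact hz x (lt_of_le_of_ne (hxt.trans ht) hx)
  -- K as a primitive
  have hKrep : ∀ t : ℝ, K t = ∫ x in (-2 : ℝ)..t, k x := by
    intro t
    rcases le_or_gt (-2 : ℝ) t with h | h
    · have h0 : (∫ y in Iic (-2 : ℝ), k y) = 0 := by
        have := hK0 (-2) (by norm_num); rwa [hKeq] at this
      rw [intervalIntegral.integral_of_le h, hKeq, ← Iic_union_Ioc_eq_Iic h,
        setIntegral_union (Iic_disjoint_Ioc le_rfl) measurableSet_Ioc (hkIic (-2))
          ((hkIic t).mono_set Ioc_subset_Iic_self), h0, zero_add]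
    · rw [intervalIntegral.integral_of_ge h.le, hK0 t (by linarith)]
      have : (∫ x in Ioc t (-2 : ℝ), k x) = 0 := by
        apply integral_eq_zero_of_ae
        rw [EventuallyEq, ae_restrict_iff' measurableSet_Ioc]
        exact Eventually.of_forall fun x hx => hz x (by linarith [hx.2])
      rw [this, neg_zero]
  have hKcont : Continuous K := by
    have hii : ∀ a b : ℝ, IntervalIntegrable k volume a b := fun a b =>
      ⟨(hkIic b).mono_set Ioc_subset_Iic_self, (hkIic a).mono_set Ioc_subset_Iic_self⟩
    have := intervalIntegral.continuous_primitive hii (-2)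
    rwa [show (fun b => ∫ x in (-2 : ℝ)..b, k x) = K from (funext hKrep).symm] at this
  -- bound for K on [-3, 1]
  obtain ⟨C0, hC0⟩ := (isCompact_Icc (a := (-3 : ℝ)) (b := 1)).exists_bound_of_continuousOn
    hKcont.continuousOn
  set C : ℝ := max C0 0 with hCdef
  have hC : ∀ t ∈ Icc (-3 : ℝ) 1, ‖K t‖ ≤ C := fun t ht => (hC0 t ht).trans (le_max_left _ _)
  -- continuous clamped version of gm
  set gm' : ℝ → ℝ := fun y => gm (max (-1) (min 1 y)) with hgm'def
  have hclamp : ∀ y : ℝ, max (-1 : ℝ) (min 1 y) ∈ Icc (-1 : ℝ) 1 := fun y =>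
    ⟨le_max_left _ _, max_le (by norm_num) (min_le_left _ _)⟩
  have hgm'cont : Continuous gm' :=
    hgm.comp_continuous (continuous_const.max (continuous_const.min continuous_id)) hclamp
  have hgm'eq : ∀ y ∈ Icc (-1 : ℝ) 1, gm' y = gm y := by
    intro y hy
    simp only [hgm'def]
    rw [min_eq_right hy.2, max_eq_right hy.1]
  set S : Set ℝ := Ioc (-1 : ℝ) 1 with hSdef
  set μS : Measure ℝ := volume.restrict S with hμSdef
  have hgpS : Integrable gp μS := hgp.mono_set Ioc_subset_Icc_self
  have hgm'S : Integrable gm' μS := hgm'cont.integrableOn_Ioc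
  -- the product kernel
  set F : ℝ × ℝ → ℝ := fun p => K (p.2 - p.1 - 1) * (gp p.1 * gm' p.2) with hFdef
  have hmem2 : ∀ᵐ p ∂(μS.prod μS), p ∈ S ×ˢ S := by
    rw [hμSdef, Measure.prod_restrict]
    exact ae_restrict_mem (measurableSet_Ioc.prod measurableSet_Ioc)
  have hF : Integrable F (μS.prod μS) := by
    apply (hgpS.mul_prod hgm'S).bdd_mul
      ((hKcont.comp ((continuous_snd.sub continuous_fst).sub continuous_const)).aestronglyMeasurable)
    filter_upwards [hmem2] with p hp
    rw [hSdef] at hp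
    obtain ⟨⟨ha1, ha2⟩, hb1, hb2⟩ := hp
    exact hC (p.2 - p.1 - 1) ⟨by linarith, by linarith⟩
  have hAx : ∀ x : ℝ, (∫ y, F (x, y) ∂μS) = (∫ y in S, K (y - x - 1) * gm' y) * gp x := by
    intro x
    calc (∫ y, F (x, y) ∂μS) = ∫ y, K (y - x - 1) * gm' y * gp x ∂μS := by
          apply integral_congr_ae
          filter_upwards with y
          simp only [hFdef]; ring
      _ = _ := integral_mul_const _ _
  have hBy : ∀ y : ℝ, (∫ x, F (x, y) ∂μS) = (∫ x in S, K (y - x - 1) * gp x) * gm' y := by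
    intro y
    calc (∫ x, F (x, y) ∂μS) = ∫ x, K (y - x - 1) * gp x * gm' y ∂μS := by
          apply integral_congr_ae
          filter_upwards with x
          simp only [hFdef]; ring
      _ = _ := integral_mul_const _ _
  have hA' : Integrable (fun x => (∫ y in S, K (y - x - 1) * gm' y) * gp x) μS := by
    have := hF.integral_prod_left
    rwa [show (fun x => ∫ y, F (x, y) ∂μS)
        = fun x => (∫ y in S, K (y - x - 1) * gm' y) * gp x from funext hAx] at this
  have hB' : Integrable (fun y => (∫ x in S, K (y - x - 1) * gp x) * gm' y) μS := by
    have := hF.integral_prod_right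
    rwa [show (fun y => ∫ x, F (x, y) ∂μS)
        = fun y => (∫ x in S, K (y - x - 1) * gp x) * gm' y from funext hBy] at this
  have hswap : (∫ x, (∫ y in S, K (y - x - 1) * gm' y) * gp x ∂μS)
      = ∫ y, (∫ x in S, K (y - x - 1) * gp x) * gm' y ∂μS := by
    have h := integral_integral_swap (f := fun x y => F (x, y)) (μ := μS) (ν := μS) hF
    calc (∫ x, (∫ y in S, K (y - x - 1) * gm' y) * gp x ∂μS)
        = ∫ x, ∫ y, F (x, y) ∂μS ∂μS := (integral_congr_ae (Eventually.of_forall hAx)).symm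
      _ = ∫ y, ∫ x, F (x, y) ∂μS ∂μS := h
      _ = _ := integral_congr_ae (Eventually.of_forall hBy)
  -- integrability of the correction integrands
  have hIKnegGp : Integrable (fun x => K (-x) * gp x) μS := by
    apply hgpS.bdd_mul (hKcont.comp continuous_neg).aestronglyMeasurable
    rw [hμSdef]
    filter_upwards [ae_restrict_mem measurableSet_Ioc] with x hx
    obtain ⟨hx1, hx2⟩ := hx
    exact hC (-x) ⟨by linarith, by linarith⟩
  have hIKGm : Integrable (fun x => K x * gm' x) μS := (hKcont.mul hgm'cont).integrableOn_Ioc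
  set Cm : ℝ := ∫ y in S, K y * gm' y with hCmdef
  set Cp : ℝ := ∫ x in S, K (-x) * gp x with hCpdef
  -- Step A : extend the inner forward integral
  have hstepA : ∀ x ∈ S, (∫ y in x..(1 : ℝ), K (y - x - 1) * gm y)
      = ∫ y in S, K (y - x - 1) * gm' y := by
    intro x hx
    have hx1 : (-1 : ℝ) < x := hx.1
    have hx2 : x ≤ 1 := hx.2
    have hc : Continuous fun y => K (y - x - 1) * gm' y :=
      (hKcont.comp ((continuous_id.sub continuous_const).sub continuous_const)).mul hgm'cont
    have h1 : (∫ y in x..(1 : ℝ), K (y - x - 1) * gm y)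
        = ∫ y in x..(1 : ℝ), K (y - x - 1) * gm' y := by
      apply intervalIntegral.integral_congr
      intro y hy
      rw [uIcc_of_le hx2] at hy
      show K (y - x - 1) * gm y = K (y - x - 1) * gm' y
      rw [hgm'eq y ⟨le_trans hx1.le hy.1, hy.2⟩]
    have h2 : (∫ y in (-1 : ℝ)..x, K (y - x - 1) * gm' y) = 0 := by
      have he : EqOn (fun y => K (y - x - 1) * gm' y) (fun _ => (0 : ℝ)) (uIcc (-1 : ℝ) x) := by
        intro y hy
        rw [uIcc_of_le hx1.le] at hy
        show K (y - x - 1) * gm' y = 0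
        rw [hK0 (y - x - 1) (by linarith [hy.2]), zero_mul]
      rw [intervalIntegral.integral_congr he]
      simp
    rw [h1, hSdef, ← intervalIntegral.integral_of_le (show (-1 : ℝ) ≤ 1 by norm_num),
      ← intervalIntegral.integral_add_adjacent_intervals (a := (-1 : ℝ)) (b := x) (c := 1)
        (hc.intervalIntegrable _ _) (hc.intervalIntegrable _ _), h2, zero_add]
  -- Step B : extend the inner backward integral
  have hstepB : ∀ x ∈ S, (∫ y in (-1 : ℝ)..x, K (x - y - 1) * gp y)
      = ∫ y in S, K (x - y - 1) * gp y := by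
    intro x hx
    have hx1 : (-1 : ℝ) < x := hx.1
    have hx2 : x ≤ 1 := hx.2
    have hint : IntegrableOn (fun y => K (x - y - 1) * gp y) (Icc (-1 : ℝ) 1) := by
      apply hgp.bdd_mul ((hKcont.comp ((continuous_const.sub continuous_id).sub continuous_const)).aestronglyMeasurable)
      filter_upwards [ae_restrict_mem measurableSet_Icc] with y hy
      obtain ⟨hy1, hy2⟩ := hy
      exact hC (x - y - 1) ⟨by linarith, by linarith⟩
    have hii : ∀ a b : ℝ, a ∈ Icc (-1 : ℝ) 1 → b ∈ Icc (-1 : ℝ) 1 →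
        IntervalIntegrable (fun y => K (x - y - 1) * gp y) volume a b := by
      intro a b ha hb
      exact ⟨hint.mono_set fun y hy => ⟨le_trans ha.1 hy.1.le, hy.2.trans hb.2⟩,
        hint.mono_set fun y hy => ⟨le_trans hb.1 hy.1.le, hy.2.trans ha.2⟩⟩
    have h2 : (∫ y in x..(1 : ℝ), K (x - y - 1) * gp y) = 0 := by
      have he : EqOn (fun y => K (x - y - 1) * gp y) (fun _ => (0 : ℝ)) (uIcc x 1) := by
        intro y hy
        rw [uIcc_of_le hx2] at hy
        show K (x - y - 1) * gp y = 0
        rw [hK0 (x - y - 1) (by linarith [hy.1]), zero_mul]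
      rw [intervalIntegral.integral_congr he]
      simp
    rw [hSdef, ← intervalIntegral.integral_of_le (show (-1 : ℝ) ≤ 1 by norm_num),
      ← intervalIntegral.integral_add_adjacent_intervals (a := (-1 : ℝ)) (b := x) (c := 1)
        (hii _ _ ⟨le_rfl, by norm_num⟩ ⟨hx1.le, hx2⟩)
        (hii _ _ ⟨hx1.le, hx2⟩ ⟨by norm_num, le_rfl⟩), h2, add_zero]
  -- identify the constant integrals
  have hCmlit : (∫ y in (-1 : ℝ)..(1 : ℝ), K (y - (-1) - 1) * gm y) = Cm := by
    have he : EqOn (fun y => K (y - (-1) - 1) * gm y) (fun y => K y * gm' y)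
        (uIcc (-1 : ℝ) 1) := by
      intro y hy
      rw [uIcc_of_le (by norm_num : (-1 : ℝ) ≤ 1)] at hy
      show K (y - (-1) - 1) * gm y = K y * gm' y
      rw [hgm'eq y hy, show y - (-1) - 1 = y by ring]
    rw [intervalIntegral.integral_congr he,
      intervalIntegral.integral_of_le (show (-1 : ℝ) ≤ 1 by norm_num), hCmdef, hSdef]
  have hCplit : (∫ y in (-1 : ℝ)..(1 : ℝ), K (1 - y - 1) * gp y) = Cp := by
    simp only [show ∀ y : ℝ, (1 : ℝ) - y - 1 = -y from fun y => by ring]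
    rw [intervalIntegral.integral_of_le (show (-1 : ℝ) ≤ 1 by norm_num), hCpdef, hSdef]
  -- put everything together
  rw [hCmlit, hCplit,
    intervalIntegral.integral_of_le (show (-1 : ℝ) ≤ 1 by norm_num),
    intervalIntegral.integral_of_le (show (-1 : ℝ) ≤ 1 by norm_num)]
  have hLHS : (∫ x in S, ((∫ y in x..(1 : ℝ), K (y - x - 1) * gm y) - Cm / K 1 * K (-x)) * gp x)
      = (∫ x, (∫ y in S, K (y - x - 1) * gm' y) * gp x ∂μS) - Cm / K 1 * Cp := by
    have he : EqOn (fun x => ((∫ y in x..(1 : ℝ), K (y - x - 1) * gm y) - Cm / K 1 * K (-x)) * gp x)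
        (fun x => (∫ y in S, K (y - x - 1) * gm' y) * gp x - Cm / K 1 * (K (-x) * gp x)) S := by
      intro x hx
      show ((∫ y in x..(1 : ℝ), K (y - x - 1) * gm y) - Cm / K 1 * K (-x)) * gp x
          = (∫ y in S, K (y - x - 1) * gm' y) * gp x - Cm / K 1 * (K (-x) * gp x)
      rw [hstepA x hx]; ring
    rw [setIntegral_congr_fun measurableSet_Ioc he, integral_sub hA' (hIKnegGp.const_mul _),
      integral_const_mul, hCpdef]
  have hRHS : (∫ x in S, ((∫ y in (-1 : ℝ)..x, K (x - y - 1) * gp y) - Cp / K 1 * K x) * gm x)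
      = (∫ x, (∫ y in S, K (x - y - 1) * gp y) * gm' x ∂μS) - Cp / K 1 * Cm := by
    have he : EqOn (fun x => ((∫ y in (-1 : ℝ)..x, K (x - y - 1) * gp y) - Cp / K 1 * K x) * gm x)
        (fun x => (∫ y in S, K (x - y - 1) * gp y) * gm' x - Cp / K 1 * (K x * gm' x)) S := by
      intro x hx
      show ((∫ y in (-1 : ℝ)..x, K (x - y - 1) * gp y) - Cp / K 1 * K x) * gm x
          = (∫ y in S, K (x - y - 1) * gp y) * gm' x - Cp / K 1 * (K x * gm' x)
      rw [hstepB x hx, hgm'eq x (Ioc_subset_Icc_self hx)]; ring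
    rw [setIntegral_congr_fun measurableSet_Ioc he, integral_sub hB' (hIKGm.const_mul _),
      integral_const_mul, hCmdef]
  rw [hLHS, hRHS, hswap]
  ring
end
end
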